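/- arXiv:2201.04852 — 10 statements merged into one kernel-verified Lean document; each statement's English description precedes it below -/
import Mathlib

section
/- Let f₄ be a symmetric 4-linear form on ℝⁿ satisfying f₄[x,x,y,y] ≥ 0 for all x, y. Then for all x, y: (f₄[x,x,y,y])² ≤ f₄[x,x,x,x] · f₄[y,y,y,y]. -/
section helpers
variable {n : ℕ} (f4 : MultilinearMap ℝ (fun _ : Fin 4 => EuclideanSpace ℝ (Fin n)) ℝ)
local notation "V" => EuclideanSpace ℝ (Fin n)
lemma qadd0 (a a' b c d : V) :
    f4 ![a + a', b, c, d] = f4 ![a, b, c, d] + f4 ![a', b, c, d] := by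
  have h := f4.map_update_add ![a, b, c, d] 0 a a'
  simpa [show ∀ z : V, Function.update ![a,b,c,d] 0 z = ![z,b,c,d] from
    fun z => by ext i; fin_cases i <;> simp] using h
lemma qadd1 (a b b' c d : V) :
    f4 ![a, b + b', c, d] = f4 ![a, b, c, d] + f4 ![a, b', c, d] := by
  have h := f4.map_update_add ![a, b, c, d] 1 b b'
  simpa [show ∀ z : V, Function.update ![a,b,c,d] 1 z = ![a,z,c,d] from
    fun z => by ext i; fin_cases i <;> simp] using h
lemma qadd2 (a b c c' d : V) :
    f4 ![a, b, c + c', d] = f4 ![a, b, c, d] + f4 ![a, b, c', d] := by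
  have h := f4.map_update_add ![a, b, c, d] 2 c c'
  simpa [show ∀ z : V, Function.update ![a,b,c,d] 2 z = ![a,b,z,d] from
    fun z => by ext i; fin_cases i <;> simp] using h
lemma qadd3 (a b c d d' : V) :
    f4 ![a, b, c, d + d'] = f4 ![a, b, c, d] + f4 ![a, b, c, d'] := by
  have h := f4.map_update_add ![a, b, c, d] 3 d d'
  simpa [show ∀ z : V, Function.update ![a,b,c,d] 3 z = ![a,b,c,z] from
    fun z => by ext i; fin_cases i <;> simp] using h
lemma qsmul0 (t : ℝ) (a b c d : V) : f4 ![t • a, b, c, d] = t * f4 ![a, b, c, d] := by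
  have h := f4.map_update_smul ![a, b, c, d] 0 t a
  simpa [show ∀ z : V, Function.update ![a,b,c,d] 0 z = ![z,b,c,d] from
    fun z => by ext i; fin_cases i <;> simp] using h
lemma qsmul1 (t : ℝ) (a b c d : V) : f4 ![a, t • b, c, d] = t * f4 ![a, b, c, d] := by
  have h := f4.map_update_smul ![a, b, c, d] 1 t b
  simpa [show ∀ z : V, Function.update ![a,b,c,d] 1 z = ![a,z,c,d] from
    fun z => by ext i; fin_cases i <;> simp] using h
lemma qsmul2 (t : ℝ) (a b c d : V) : f4 ![a, b, t • c, d] = t * f4 ![a, b, c, d] := by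
  have h := f4.map_update_smul ![a, b, c, d] 2 t c
  simpa [show ∀ z : V, Function.update ![a,b,c,d] 2 z = ![a,b,z,d] from
    fun z => by ext i; fin_cases i <;> simp] using h
lemma qsmul3 (t : ℝ) (a b c d : V) : f4 ![a, b, c, t • d] = t * f4 ![a, b, c, d] := by
  have h := f4.map_update_smul ![a, b, c, d] 3 t d
  simpa [show ∀ z : V, Function.update ![a,b,c,d] 3 z = ![a,b,c,z] from
    fun z => by ext i; fin_cases i <;> simp] using h
end helpers

/-- Cauchy–Schwarz-type inequality for a biquadratically nonnegative symmetric 4-linear form: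
`(f₄[x,x,y,y])² ≤ f₄[x,x,x,x] · f₄[y,y,y,y]`. -/
theorem quartic_cauchy_schwarz {n : ℕ}
    (f4 : MultilinearMap ℝ (fun _ : Fin 4 => EuclideanSpace ℝ (Fin n)) ℝ)
    (hsymm : ∀ (v : Fin 4 → EuclideanSpace ℝ (Fin n)) (σ : Equiv.Perm (Fin 4)),
      f4 (v ∘ σ) = f4 v)
    (hpos : ∀ x y : EuclideanSpace ℝ (Fin n), 0 ≤ f4 ![x, x, y, y])
    (x y : EuclideanSpace ℝ (Fin n)) :
    (f4 ![x, x, y, y]) ^ 2 ≤ f4 ![x, x, x, x] * f4 ![y, y, y, y] := by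
  have qs : ∀ (i j : Fin 4) (v w : Fin 4 → EuclideanSpace ℝ (Fin n)),
      v ∘ Equiv.swap i j = w → f4 w = f4 v :=
    fun i j v w h => h ▸ hsymm v (Equiv.swap i j)
  have b1 : f4 ![y, x, x, x] = f4 ![x, x, x, y] :=
    qs 0 3 _ _ (by ext i; fin_cases i <;> simp [Equiv.swap_apply_def])
  have b2 : f4 ![x, y, x, x] = f4 ![x, x, x, y] :=
    qs 1 3 _ _ (by ext i; fin_cases i <;> simp [Equiv.swap_apply_def])
  have b3 : f4 ![x, x, y, x] = f4 ![x, x, x, y] :=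
    qs 2 3 _ _ (by ext i; fin_cases i <;> simp [Equiv.swap_apply_def])
  have c1 : f4 ![x, y, x, y] = f4 ![x, x, y, y] :=
    qs 1 2 _ _ (by ext i; fin_cases i <;> simp [Equiv.swap_apply_def])
  have c2 : f4 ![y, x, x, y] = f4 ![x, x, y, y] := by
    rw [← c1]; exact qs 0 1 _ _ (by ext i; fin_cases i <;> simp [Equiv.swap_apply_def])
  have c3 : f4 ![y, x, y, x] = f4 ![x, x, y, y] := by
    rw [← c2]; exact qs 2 3 _ _ (by ext i; fin_cases i <;> simp [Equiv.swap_apply_def])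
  have c4 : f4 ![x, y, y, x] = f4 ![x, x, y, y] := by
    rw [← c1]; exact qs 2 3 _ _ (by ext i; fin_cases i <;> simp [Equiv.swap_apply_def])
  have c5 : f4 ![y, y, x, x] = f4 ![x, x, y, y] := by
    rw [← c3]; exact qs 1 2 _ _ (by ext i; fin_cases i <;> simp [Equiv.swap_apply_def])
  have d1 : f4 ![y, x, y, y] = f4 ![x, y, y, y] :=
    qs 0 1 _ _ (by ext i; fin_cases i <;> simp [Equiv.swap_apply_def])
  have d2 : f4 ![y, y, x, y] = f4 ![x, y, y, y] :=
    qs 0 2 _ _ (by ext i; fin_cases i <;> simp [Equiv.swap_apply_def])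
  have d3 : f4 ![y, y, y, x] = f4 ![x, y, y, y] :=
    qs 0 3 _ _ (by ext i; fin_cases i <;> simp [Equiv.swap_apply_def])
  set A := f4 ![x, x, x, x] with hA
  set C := f4 ![x, x, y, y] with hC
  set E := f4 ![y, y, y, y] with hE
  have key : ∀ t : ℝ, 0 ≤ A - 2 * t ^ 2 * C + t ^ 4 * E := by
    intro t
    have h := hpos (x + t • y) (x + (-t) • y)
    have expand : f4 ![x + t • y, x + t • y, x + (-t) • y, x + (-t) • y]
        = A - 2 * t ^ 2 * C + t ^ 4 * E := by
      simp only [qadd0, qadd1, qadd2, qadd3, qsmul0, qsmul1, qsmul2, qsmul3,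
        b1, b2, b3, c1, c2, c3, c4, c5, d1, d2, d3, ← hA, ← hC, ← hE]
      ring
    linarith [expand ▸ h]
  have hC0 : 0 ≤ C := hpos x y
  have hA0 : 0 ≤ A := hpos x x
  have hE0 : 0 ≤ E := hpos y y
  rcases eq_or_lt_of_le hE0 with hEz | hEp
  · have hCz : C = 0 := by
      by_contra hne
      have hCp : 0 < C := lt_of_le_of_ne hC0 (Ne.symm hne)
      have ht := key (Real.sqrt ((A + 1) / (2 * C)))
      rw [← hEz] at ht
      have h2 : (Real.sqrt ((A + 1) / (2 * C))) ^ 2 = (A + 1) / (2 * C) :=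
        Real.sq_sqrt (by positivity)
      rw [h2] at ht
      have : 2 * ((A + 1) / (2 * C)) * C = A + 1 := by field_simp
      nlinarith
    rw [hCz, ← hEz]; nlinarith
  · have ht := key (Real.sqrt (C / E))
    have h2 : (Real.sqrt (C / E)) ^ 2 = C / E := Real.sq_sqrt (by positivity)
    have h4 : (Real.sqrt (C / E)) ^ 4 = (C / E) ^ 2 := by
      rw [show (4 : ℕ) = 2 * 2 by rfl, pow_mul, h2]
    rw [h2, h4] at ht
    have hne : E ≠ 0 := ne_of_gt hEp
    have e1 : 2 * (C / E) * C = 2 * (C ^ 2 / E) := by field_simp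
    have e2 : (C / E) ^ 2 * E = C ^ 2 / E := by field_simp
    rw [e1, e2] at ht
    have hdiv : C ^ 2 / E ≤ A := by linarith
    calc C ^ 2 = C ^ 2 / E * E := by field_simp
    _ ≤ A * E := by nlinarith
end

section
/- Let f₄ be a symmetric 4-linear form on ℝⁿ with f₄[x,x,y,y] ≥ 0 for all x, y, and d(x) = f₄[x,x,x,x]. Then for all x, y: d(y) ≥ d(x) + ⟨∇d(x), y − x⟩ + (1/3) d(y − x), i.e., d is uniformly convex of degree four with constant σ = 4/3 with respect to the seminorm ‖u‖_f = d(u)^{1/4}. -/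
/-- Uniform convexity of degree four of `d(x) = f₄[x]⁴` with constant `σ = 4/3`:
`d(y) ≥ d(x) + ⟨∇d(x), y−x⟩ + (1/3) d(y−x)`, where `∇d(x)[h] = 4 f₄[x,x,x,h]`. -/
theorem quartic_form_uniformly_convex {n : ℕ}
    (f4 : MultilinearMap ℝ (fun _ : Fin 4 => EuclideanSpace ℝ (Fin n)) ℝ)
    (hsymm : ∀ (v : Fin 4 → EuclideanSpace ℝ (Fin n)) (σ : Equiv.Perm (Fin 4)),
      f4 (v ∘ σ) = f4 v)
    (hpos : ∀ x y : EuclideanSpace ℝ (Fin n), 0 ≤ f4 ![x, x, y, y])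
    (x y : EuclideanSpace ℝ (Fin n)) :
    f4 ![y, y, y, y] ≥ f4 ![x, x, x, x] + 4 * f4 ![x, x, x, y - x]
      + (1 / 3) * f4 ![y - x, y - x, y - x, y - x] := by
  have swap : ∀ (σ : Equiv.Perm (Fin 4)) (a b c d : EuclideanSpace ℝ (Fin n)),
      f4 ![a, b, c, d] = f4 ![![a,b,c,d] (σ 0), ![a,b,c,d] (σ 1), ![a,b,c,d] (σ 2),
        ![a,b,c,d] (σ 3)] := by
    intro σ a b c d
    have h := hsymm ![a, b, c, d] σ
    have e : (![a,b,c,d] ∘ σ) = ![![a,b,c,d] (σ 0), ![a,b,c,d] (σ 1), ![a,b,c,d] (σ 2),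
        ![a,b,c,d] (σ 3)] := by
      funext i; fin_cases i <;> rfl
    rw [e] at h
    exact h.symm
  have s01 : ∀ a b c d : EuclideanSpace ℝ (Fin n),
      f4 ![a, b, c, d] = f4 ![b, a, c, d] := by
    intro a b c d
    simpa [Equiv.swap_apply_def] using swap (Equiv.swap 0 1) a b c d
  have s02 : ∀ a b c d : EuclideanSpace ℝ (Fin n),
      f4 ![a, b, c, d] = f4 ![c, b, a, d] := by
    intro a b c d
    simpa [Equiv.swap_apply_def] using swap (Equiv.swap 0 2) a b c d
  have s03 : ∀ a b c d : EuclideanSpace ℝ (Fin n),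
      f4 ![a, b, c, d] = f4 ![d, b, c, a] := by
    intro a b c d
    simpa [Equiv.swap_apply_def] using swap (Equiv.swap 0 3) a b c d
  have s12 : ∀ a b c d : EuclideanSpace ℝ (Fin n),
      f4 ![a, b, c, d] = f4 ![a, c, b, d] := by
    intro a b c d
    simpa [Equiv.swap_apply_def] using swap (Equiv.swap 1 2) a b c d
  have s13 : ∀ a b c d : EuclideanSpace ℝ (Fin n),
      f4 ![a, b, c, d] = f4 ![a, d, c, b] := by
    intro a b c d
    simpa [Equiv.swap_apply_def] using swap (Equiv.swap 1 3) a b c d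
  have s23 : ∀ a b c d : EuclideanSpace ℝ (Fin n),
      f4 ![a, b, c, d] = f4 ![a, b, d, c] := by
    intro a b c d
    simpa [Equiv.swap_apply_def] using swap (Equiv.swap 2 3) a b c d
  -- additivity and smul in slot 1 via Fin.cons
  have add1 : ∀ (a a' b c d : EuclideanSpace ℝ (Fin n)),
      f4 ![a + a', b, c, d] = f4 ![a, b, c, d] + f4 ![a', b, c, d] := by
    intro a a' b c d
    exact f4.cons_add ![b, c, d] a a'
  have smul1 : ∀ (r : ℝ) (a b c d : EuclideanSpace ℝ (Fin n)),
      f4 ![r • a, b, c, d] = r * f4 ![a, b, c, d] := by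
    intro r a b c d
    exact f4.cons_smul ![b, c, d] r a
  have add2 : ∀ (a b b' c d : EuclideanSpace ℝ (Fin n)),
      f4 ![a, b + b', c, d] = f4 ![a, b, c, d] + f4 ![a, b', c, d] := by
    intro a b b' c d
    rw [s01 a (b + b') c d, add1, s01 b a c d, s01 b' a c d]
  have smul2 : ∀ (r : ℝ) (a b c d : EuclideanSpace ℝ (Fin n)),
      f4 ![a, r • b, c, d] = r * f4 ![a, b, c, d] := by
    intro r a b c d
    rw [s01 a (r • b) c d, smul1, s01 b a c d]
  have add3 : ∀ (a b c c' d : EuclideanSpace ℝ (Fin n)),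
      f4 ![a, b, c + c', d] = f4 ![a, b, c, d] + f4 ![a, b, c', d] := by
    intro a b c c' d
    rw [s02 a b (c + c') d, add1, s02 c b a d, s02 c' b a d]
  have add4 : ∀ (a b c d d' : EuclideanSpace ℝ (Fin n)),
      f4 ![a, b, c, d + d'] = f4 ![a, b, c, d] + f4 ![a, b, c, d'] := by
    intro a b c d d'
    rw [s03 a b c (d + d'), add1, s03 d b c a, s03 d' b c a]
  set z := y - x with hz
  have hxy : y = x + z := by rw [hz]; abel
  -- canonical form equalities
  have e1 : f4 ![z, x, x, x] = f4 ![x, x, x, z] := by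
    rw [s01 z x x x, s12 x z x x, s23 x x z x]
  have e2 : f4 ![x, z, x, x] = f4 ![x, x, x, z] := by
    rw [s12 x z x x, s23 x x z x]
  have e3 : f4 ![x, x, z, x] = f4 ![x, x, x, z] := s23 x x z x
  have e4 : f4 ![z, z, x, x] = f4 ![x, x, z, z] := by
    rw [s02 z z x x, s13 x z z x]
  have e5 : f4 ![z, x, z, x] = f4 ![x, x, z, z] := by
    rw [s01 z x z x, s13 x z z x]
  have e6 : f4 ![z, x, x, z] = f4 ![x, x, z, z] := s02 z x x z
  have e7 : f4 ![x, z, z, x] = f4 ![x, x, z, z] := s13 x z z x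
  have e8 : f4 ![x, z, x, z] = f4 ![x, x, z, z] := s12 x z x z
  have e9 : f4 ![z, z, z, x] = f4 ![x, z, z, z] := s03 z z z x
  have e10 : f4 ![z, z, x, z] = f4 ![x, z, z, z] := s02 z z x z
  have e11 : f4 ![z, x, z, z] = f4 ![x, z, z, z] := s01 z x z z
  have expand : f4 ![x + z, x + z, x + z, x + z]
      = f4 ![x, x, x, x] + 4 * f4 ![x, x, x, z] + 6 * f4 ![x, x, z, z]
        + 4 * f4 ![x, z, z, z] + f4 ![z, z, z, z] := by
    rw [add1, add2, add2, add3, add3, add3, add3, add4, add4, add4, add4, add4, add4,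
      add4, add4]
    rw [e1, e2, e3, e4, e5, e6, e7, e8, e9, e10, e11]
    ring
  have key : (0:ℝ) ≤ f4 ![x + (3:ℝ)⁻¹ • z, x + (3:ℝ)⁻¹ • z, z, z] :=
    hpos (x + (3:ℝ)⁻¹ • z) z
  have keyexp : f4 ![x + (3:ℝ)⁻¹ • z, x + (3:ℝ)⁻¹ • z, z, z]
      = f4 ![x, x, z, z] + (2/3) * f4 ![x, z, z, z] + (1/9) * f4 ![z, z, z, z] := by
    rw [add1, add2, add2, smul1, smul2, smul1, smul2, e11]
    ring
  rw [keyexp] at key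
  rw [ge_iff_le, hxy, expand]
  linarith
end

section
/- Let f₄ be a symmetric 4-linear form on ℝⁿ with f₄[x,x,y,y] ≥ 0 for all x, y, and d(x) = f₄[x,x,x,x]. Then for all x, y: d(y) ≥ d(x) + 4 f₄[x,x,x,y−x] + 2 f₄[x,x,y−x,y−x], i.e., d(y) ≥ d(x) + ⟨∇d(x), y−x⟩ + (1/6)⟨∇²d(x)(y−x), y−x⟩. -/
/-- Lower quadratic growth bound for `d(x) = f₄[x]⁴`:
`d(y) ≥ d(x) + ⟨∇d(x), y−x⟩ + (1/6)⟨∇²d(x)(y−x), y−x⟩`, i.e.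
`d(y) ≥ d(x) + 4 f₄[x,x,x,y−x] + 2 f₄[x,x,y−x,y−x]`. -/
theorem quartic_form_quadratic_growth {n : ℕ}
    (f4 : MultilinearMap ℝ (fun _ : Fin 4 => EuclideanSpace ℝ (Fin n)) ℝ)
    (hsymm : ∀ (v : Fin 4 → EuclideanSpace ℝ (Fin n)) (σ : Equiv.Perm (Fin 4)),
      f4 (v ∘ σ) = f4 v)
    (hpos : ∀ x y : EuclideanSpace ℝ (Fin n), 0 ≤ f4 ![x, x, y, y])
    (x y : EuclideanSpace ℝ (Fin n)) :
    f4 ![y, y, y, y] ≥ f4 ![x, x, x, x] + 4 * f4 ![x, x, x, y - x]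
      + 2 * f4 ![x, x, y - x, y - x] := by
  let V := EuclideanSpace ℝ (Fin n)
  -- additivity in slot 0
  have add1 : ∀ a a' b c d : V,
      f4 ![a + a', b, c, d] = f4 ![a, b, c, d] + f4 ![a', b, c, d] := by
    intro a a' b c d
    have h := f4.map_update_add ![a, b, c, d] 0 a a'
    have e : ∀ z : V, Function.update ![a, b, c, d] (0 : Fin 4) z = ![z, b, c, d] := by
      intro z; funext i; fin_cases i <;> simp
    simpa [e] using h
  -- additivity in slot 1
  have add2 : ∀ a b b' c d : V,
      f4 ![a, b + b', c, d] = f4 ![a, b, c, d] + f4 ![a, b', c, d] := by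
    intro a b b' c d
    have h := f4.map_update_add ![a, b, c, d] 1 b b'
    have e : ∀ z : V, Function.update ![a, b, c, d] (1 : Fin 4) z = ![a, z, c, d] := by
      intro z; funext i; fin_cases i <;> simp
    simpa [e] using h
  -- subtraction in slot 2
  have sub3 : ∀ a b c c' d : V,
      f4 ![a, b, c - c', d] = f4 ![a, b, c, d] - f4 ![a, b, c', d] := by
    intro a b c c' d
    have h := f4.map_update_sub ![a, b, c, d] 2 c c'
    have e : ∀ z : V, Function.update ![a, b, c, d] (2 : Fin 4) z = ![a, b, z, d] := by
      intro z; funext i; fin_cases i <;> simp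
    simpa [e] using h
  -- subtraction in slot 3
  have sub4 : ∀ a b c d d' : V,
      f4 ![a, b, c, d - d'] = f4 ![a, b, c, d] - f4 ![a, b, c, d'] := by
    intro a b c d d'
    have h := f4.map_update_sub ![a, b, c, d] 3 d d'
    have e : ∀ z : V, Function.update ![a, b, c, d] (3 : Fin 4) z = ![a, b, c, z] := by
      intro z; funext i; fin_cases i <;> simp
    simpa [e] using h
  -- symmetry swaps
  have swap12 : ∀ a b c d : V, f4 ![b, a, c, d] = f4 ![a, b, c, d] := by
    intro a b c d
    have h := hsymm ![a, b, c, d] (Equiv.swap 0 1)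
    have e : (![a, b, c, d] ∘ (Equiv.swap (0 : Fin 4) 1)) = ![b, a, c, d] := by
      funext i; fin_cases i <;> simp [Equiv.swap_apply_of_ne_of_ne]
    rwa [e] at h
  have swap23 : ∀ a b c d : V, f4 ![a, c, b, d] = f4 ![a, b, c, d] := by
    intro a b c d
    have h := hsymm ![a, b, c, d] (Equiv.swap 1 2)
    have e : (![a, b, c, d] ∘ (Equiv.swap (1 : Fin 4) 2)) = ![a, c, b, d] := by
      funext i; fin_cases i <;> simp [Equiv.swap_apply_of_ne_of_ne]
    rwa [e] at h
  have swap34 : ∀ a b c d : V, f4 ![a, b, d, c] = f4 ![a, b, c, d] := by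
    intro a b c d
    have h := hsymm ![a, b, c, d] (Equiv.swap 2 3)
    have e : (![a, b, c, d] ∘ (Equiv.swap (2 : Fin 4) 3)) = ![a, b, d, c] := by
      funext i; fin_cases i <;> simp [Equiv.swap_apply_of_ne_of_ne]
    rwa [e] at h
  -- expansion of the last two slots in y - x
  have E1 : ∀ a b : V, f4 ![a, b, y - x, y - x]
      = f4 ![a, b, y, y] - 2 * f4 ![a, b, x, y] + f4 ![a, b, x, x] := by
    intro a b
    rw [sub3, sub4, sub4, ← swap34 a b x y]
    ring
  -- canonical reorderings
  have r1 : f4 ![x, y, x, x] = f4 ![x, x, x, y] := by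
    rw [swap23 x x y x, swap34 x x x y]
  have r2 : f4 ![x, y, x, y] = f4 ![x, x, y, y] := swap23 x x y y
  have r3 : f4 ![y, y, x, y] = f4 ![x, y, y, y] := by
    rw [swap23 y x y y, swap12 x y y y]
  have r4 : f4 ![y, y, x, x] = f4 ![x, x, y, y] := by
    rw [swap23 y x y x, swap12 x y y x, swap34 x y x y, r2]
  -- key identity
  have key : f4 ![x + y, x + y, y - x, y - x]
      = f4 ![y, y, y, y] + f4 ![x, x, x, x] - 2 * f4 ![x, x, y, y] := by
    rw [add1, add2, add2, swap12 x y (y - x) (y - x), E1 x x, E1 x y, E1 y y,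
      r1, r2, r3, r4]
    ring
  have hx3 : f4 ![x, x, x, y - x] = f4 ![x, x, x, y] - f4 ![x, x, x, x] := by
    rw [sub4]
  have hx2 : f4 ![x, x, y - x, y - x]
      = f4 ![x, x, y, y] - 2 * f4 ![x, x, x, y] + f4 ![x, x, x, x] := E1 x x
  have hp := hpos (x + y) (y - x)
  rw [key] at hp
  rw [hx3, hx2]
  linarith
end

section
/- Let f₄ be a symmetric 4-linear form on ℝⁿ with f₄[x,x,y,y] ≥ 0 for all x, y and f₄[x,x,x,x] > 0 for all x ≠ 0. Define Q(x) = (1/2)(f₄[x,x,x,x])^{1/2}. Then for every x ≠ 0 and every h, the second derivative of Q satisfies ∇²Q(x)[h,h] ≤ 3 (f₄[h,h,h,h])^{1/2}. -/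
/-!
Write `a = f₄[x,x,x,x]`, `b = f₄[x,x,x,h]`, `c = f₄[x,x,h,h]`, `d = f₄[h,h,h,h]`. By symmetry the
derivatives of `y ↦ f₄[y,y,y,y]` are `4 f₄[y,y,y,·]` and `12 f₄[y,y,·,·]`, so differentiating
`Q = √(f₄[y,y,y,y] / 4)` twice gives `∇²Q(x)[h,h] = 3c/√a - 2b²/a^{3/2} ≤ 3c/√a`.
Biquadratic nonnegativity at `(x + t h, x - t h)` reads `0 ≤ a - 2ct² + dt⁴` for every `t`,
which forces `c ≤ √a √d`.
-/

open Function Filter Topology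

theorem MultilinearMap.continuous_of_finiteDimensional {𝕜 ι : Type*} [NontriviallyNormedField 𝕜]
    [CompleteSpace 𝕜] [Fintype ι] {E : ι → Type*} [∀ i, NormedAddCommGroup (E i)]
    [∀ i, NormedSpace 𝕜 (E i)] [∀ i, FiniteDimensional 𝕜 (E i)] {G : Type*}
    [NormedAddCommGroup G] [NormedSpace 𝕜 G] (f : MultilinearMap 𝕜 E G) : Continuous f := by
  classical
  let b i := Module.finBasis 𝕜 (E i)
  have hf : ⇑f = fun m => ∑ r : (i : ι) → Fin (Module.finrank 𝕜 (E i)),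
      (∏ i, (b i).coord (r i) (m i)) • f fun i => b i (r i) := by
    ext m
    conv_lhs => rw [← funext fun i => (b i).sum_repr (m i)]
    simp only [f.map_sum, f.map_smul_univ, Module.Basis.coord_apply]
  rw [hf]
  refine continuous_finsetSum _ fun r _ => Continuous.smul ?_ continuous_const
  exact continuous_finsetProd _ fun i _ =>
    (LinearMap.continuous_of_finiteDimensional _).comp (continuous_apply i)

theorem le_sqrt_mul_sqrt_of_forall_nonneg {a c d : ℝ}
    (h : ∀ t : ℝ, 0 ≤ a - 2 * c * t ^ 2 + d * t ^ 4) : c ≤ √a * √d := by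
  have ha : 0 ≤ a := by simpa using h 0
  rcases le_or_gt c 0 with hc | hc
  · exact hc.trans (by positivity)
  rcases le_or_gt d 0 with hd | hd
  · have ht := h √((a + 1) / (2 * c))
    rw [show (4 : ℕ) = 2 * 2 from rfl, pow_mul, Real.sq_sqrt (by positivity)] at ht
    field_simp at ht
    nlinarith
  · have ht := h √(c / d)
    rw [show (4 : ℕ) = 2 * 2 from rfl, pow_mul, Real.sq_sqrt (by positivity)] at ht
    rw [← Real.sqrt_mul ha, Real.le_sqrt hc.le (by positivity)]
    field_simp at ht
    nlinarith

namespace MultilinearMap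

section Semiring

variable {R ι M N : Type*} [CommSemiring R] [AddCommMonoid M] [Module R M] [AddCommMonoid N]
  [Module R N]

def IsSymmetric (f : MultilinearMap R (fun _ : ι => M) N) : Prop :=
  ∀ (v : ι → M) (σ : Equiv.Perm ι), f (v ∘ σ) = f v

theorem IsSymmetric.map_update_eq [DecidableEq ι] {f : MultilinearMap R (fun _ : ι => M) N}
    (hf : f.IsSymmetric) {v : ι → M} {i j : ι} (hv : v i = v j) (a : M) :
    f (update v i a) = f (update v j a) := by
  rw [← hf _ (Equiv.swap i j), update_comp_equiv, Equiv.symm_swap, Equiv.swap_apply_left]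
  congr 2
  ext l
  rcases eq_or_ne l i with rfl | hli
  · simp [hv]
  rcases eq_or_ne l j with rfl | hlj
  · simp [hv]
  · simp [Equiv.swap_apply_of_ne_of_ne hli hlj]

theorem apply_vecCons {n : ℕ} (f : MultilinearMap R (fun _ : Fin (n + 1) => M) N) (a : M)
    (v : Fin n → M) : f (Matrix.vecCons a v) = f.curryLeft a v :=
  rfl

end Semiring

theorem IsSymmetric.apply_add_smul_sub_smul {R M N : Type*} [CommRing R] [AddCommGroup M]
    [Module R M] [AddCommGroup N] [Module R N] {f : MultilinearMap R (fun _ : Fin 4 => M) N}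
    (hf : f.IsSymmetric) (x h : M) (t : R) :
    f ![x + t • h, x + t • h, x - t • h, x - t • h] =
      f ![x, x, x, x] - (2 * t ^ 2) • f ![x, x, h, h] + t ^ 4 • f ![h, h, h, h] := by
  have swap (i j : Fin 4) (v w : Fin 4 → M) (hvw : w = v ∘ Equiv.swap i j) : f w = f v := by
    rw [hvw, hf]
  -- Oriented so that rewriting moves every `x` in front of every `h`.
  have swap01 (c d : M) : f ![h, x, c, d] = f ![x, h, c, d] :=
    swap 0 1 _ _ (by ext i; fin_cases i <;> rfl)
  have swap12 (a d : M) : f ![a, h, x, d] = f ![a, x, h, d] :=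
    swap 1 2 _ _ (by ext i; fin_cases i <;> rfl)
  have swap23 (a b : M) : f ![a, b, h, x] = f ![a, b, x, h] :=
    swap 2 3 _ _ (by ext i; fin_cases i <;> rfl)
  simp only [apply_vecCons, map_add, map_sub, map_smul, add_apply, sub_apply, smul_apply]
  simp only [← apply_vecCons, swap01, swap12, swap23]
  module

theorem IsSymmetric.apply_le_sqrt_mul_sqrt {E : Type*} [AddCommGroup E] [Module ℝ E]
    {f : MultilinearMap ℝ (fun _ : Fin 4 => E) ℝ} (hf : f.IsSymmetric)
    (hpos : ∀ x y : E, 0 ≤ f ![x, x, y, y]) (x h : E) :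
    f ![x, x, h, h] ≤ √(f ![x, x, x, x]) * √(f ![h, h, h, h]) := by
  refine le_sqrt_mul_sqrt_of_forall_nonneg fun t => ?_
  have := hpos (x + t • h) (x - t • h)
  rw [hf.apply_add_smul_sub_smul] at this
  simp only [smul_eq_mul] at this
  linarith

end MultilinearMap

theorem Fin.update_const_last {α : Type*} {n : ℕ} (x h : α) :
    update (fun _ : Fin (n + 1) => x) (Fin.last n) h = Fin.snoc (fun _ => x) h := by
  rw [← Fin.update_snoc_last (x := x)]
  congr
  ext i
  refine Fin.lastCases ?_ (fun j => ?_) i <;> simp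

namespace ContinuousMultilinearMap

variable {𝕜 ι E G : Type*} [NontriviallyNormedField 𝕜] [NormedAddCommGroup E] [NormedSpace 𝕜 E]
  [NormedAddCommGroup G] [NormedSpace 𝕜 G]

theorem hasFDerivAt_apply_const_of_update_eq [Fintype ι] [DecidableEq ι]
    (f : ContinuousMultilinearMap 𝕜 (fun _ : ι => E) G) {x : E} (j : ι)
    (hf : ∀ i h, f (update (fun _ => x) i h) = f (update (fun _ => x) j h)) :
    HasFDerivAt (fun y => f (fun _ => y))
      (Fintype.card ι • f.toContinuousLinearMap (fun _ => x) j) x := by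
  refine (HasFDerivAt.multilinear_comp f fun _ => hasFDerivAt_id x).congr_fderiv ?_
  ext h
  simp only [sum_apply, ContinuousLinearMap.comp_apply, ContinuousLinearMap.id_apply, id,
    toContinuousLinearMap_apply]
  rw [Finset.sum_congr rfl fun i _ => hf i h]
  simp

theorem hasFDerivAt_apply_const {n : ℕ}
    (f : ContinuousMultilinearMap 𝕜 (fun _ : Fin (n + 1) => E) G)
    (hf : f.toMultilinearMap.IsSymmetric) (x : E) :
    HasFDerivAt (fun y => f (fun _ => y)) ((n + 1) • f.curryRight (fun _ => x)) x := by
  refine (f.hasFDerivAt_apply_const_of_update_eq (Fin.last n)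
    fun i h => hf.map_update_eq (v := fun _ => x) (i := i) rfl h).congr_fderiv ?_
  ext h
  simp [Fin.update_const_last]

theorem hasFDerivAt_curryRight_apply_const {n : ℕ}
    (f : ContinuousMultilinearMap 𝕜 (fun _ : Fin (n + 2) => E) G)
    (hf : f.toMultilinearMap.IsSymmetric) (x : E) :
    HasFDerivAt (fun y => f.curryRight (fun _ => y))
      ((n + 1) • f.curryRight.curryRight (fun _ => x)) x := by
  have hupd (i : Fin (n + 1)) (h : E) : f.curryRight (update (fun _ => x) i h) =
      f.curryRight (update (fun _ => x) (Fin.last n) h) := by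
    ext k
    simp only [curryRight_apply, Fin.snoc_update]
    exact hf.map_update_eq (by simp) h
  refine (f.curryRight.hasFDerivAt_apply_const_of_update_eq (Fin.last n) hupd).congr_fderiv ?_
  ext h k
  simp [Fin.update_const_last]

theorem hasFDerivAt_apply_const_div [CharZero 𝕜] {n : ℕ}
    (f : ContinuousMultilinearMap 𝕜 (fun _ : Fin (n + 1) => E) 𝕜)
    (hf : f.toMultilinearMap.IsSymmetric) (x : E) :
    HasFDerivAt (fun y => f (fun _ => y) / (n + 1)) (f.curryRight fun _ => x) x := by
  simp_rw [div_eq_mul_inv]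
  refine ((f.hasFDerivAt_apply_const hf x).mul_const _).congr_fderiv ?_
  ext
  simp [inv_mul_cancel_left₀ (Nat.cast_add_one_ne_zero n : (n + 1 : 𝕜) ≠ 0)]

end ContinuousMultilinearMap

theorem iteratedFDeriv_two_sqrt_apply {E : Type*} [NormedAddCommGroup E] [NormedSpace ℝ E]
    {g : E → ℝ} {g' : E → E →L[ℝ] ℝ} {g'' : E →L[ℝ] E →L[ℝ] ℝ} {x : E}
    (hg : ∀ᶠ y in 𝓝 x, HasFDerivAt g (g' y) y) (hg' : HasFDerivAt g' g'' x) (hx : 0 < g x)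
    (h k : E) :
    iteratedFDeriv ℝ 2 (fun y => √(g y)) x ![h, k] =
      g'' h k / (2 * √(g x)) - g' x h * g' x k / (4 * √(g x) ^ 3) := by
  have hgx : HasFDerivAt g (g' x) x := hg.self_of_nhds
  have hpos : ∀ᶠ y in 𝓝 x, 0 < g y := hgx.continuousAt.eventually (lt_mem_nhds hx)
  have hfderiv : fderiv ℝ (fun y => √(g y)) =ᶠ[𝓝 x] fun y => (2 * √(g y))⁻¹ • g' y := by
    filter_upwards [hg, hpos] with y hy hy0
    rw [(hy.sqrt hy0.ne').fderiv, one_div]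
  have hinv : HasFDerivAt (fun y => (2 * √(g y))⁻¹)
      (-((2 * √(g x)) ^ 2)⁻¹ • (2 : ℝ) • (1 / (2 * √(g x))) • g' x) x :=
    (hasDerivAt_inv (by positivity)).comp_hasFDerivAt x ((hgx.sqrt hx.ne').const_mul 2)
  rw [iteratedFDeriv_two_apply, hfderiv.fderiv_eq, (hinv.fun_smul hg').fderiv]
  simp
  field_simp
  ring

theorem ContinuousMultilinearMap.iteratedFDeriv_two_half_sqrt_apply {E : Type*}
    [NormedAddCommGroup E] [NormedSpace ℝ E] (F : ContinuousMultilinearMap ℝ (fun _ : Fin 4 => E) ℝ)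
    (hF : F.toMultilinearMap.IsSymmetric) {x : E} (hx : 0 < F ![x, x, x, x]) (h : E) :
    iteratedFDeriv ℝ 2 (fun y => 1 / 2 * √(F ![y, y, y, y])) x ![h, h] =
      3 * F ![x, x, h, h] / √(F ![x, x, x, x]) - 2 * F ![x, x, x, h] ^ 2 / √(F ![x, x, x, x]) ^ 3 := by
  have hdiag (y : E) : F (fun _ => y) = F ![y, y, y, y] :=
    congrArg F (by ext i; fin_cases i <;> rfl)
  have hhalf (a : ℝ) : √(a / 4) = √a / 2 := by
    rw [Real.sqrt_div' _ zero_le_four, show (4 : ℝ) = 2 ^ 2 by norm_num, Real.sqrt_sq zero_le_two]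
  -- Dividing by `4` under the root makes the first derivative exactly `F[y, y, y, ·]`.
  have hQ : (fun y => 1 / 2 * √(F ![y, y, y, y])) = fun y => √(F (fun _ => y) / 4) := by
    ext y
    rw [hdiag, hhalf]
    ring
  have hg (y : E) : HasFDerivAt (fun y => F (fun _ => y) / 4) (F.curryRight fun _ => y) y := by
    simpa only [Nat.cast_ofNat, show (3 + 1 : ℝ) = 4 by norm_num]
      using F.hasFDerivAt_apply_const_div hF y
  have hxxxh : F.curryRight (fun _ => x) h = F ![x, x, x, h] :=
    congrArg F (by ext i; fin_cases i <;> rfl)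
  have hxxhh : F.curryRight.curryRight (fun _ => x) h h = F ![x, x, h, h] :=
    congrArg F (by ext i; fin_cases i <;> rfl)
  rw [hQ, iteratedFDeriv_two_sqrt_apply (.of_forall hg) (F.hasFDerivAt_curryRight_apply_const hF x)
    (by rw [hdiag]; positivity), hdiag, hhalf]
  simp only [smul_apply, nsmul_eq_mul, hxxxh, hxxhh]
  push_cast
  field_simp
  ring

/-- For a positive definite, biquadratically nonnegative symmetric 4-linear form `f₄`,
the function `Q(x) = (1/2)(f₄[x]⁴)^{1/2}` satisfies `∇²Q(x)[h,h] ≤ 3 (f₄[h]⁴)^{1/2}`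
for every `x ≠ 0` and every `h`. -/
theorem quartic_norm_sq_hessian_upper {n : ℕ}
    (f4 : MultilinearMap ℝ (fun _ : Fin 4 => EuclideanSpace ℝ (Fin n)) ℝ)
    (hsymm : ∀ (v : Fin 4 → EuclideanSpace ℝ (Fin n)) (σ : Equiv.Perm (Fin 4)),
      f4 (v ∘ σ) = f4 v)
    (hpos : ∀ x y : EuclideanSpace ℝ (Fin n), 0 ≤ f4 ![x, x, y, y])
    (hpd : ∀ x : EuclideanSpace ℝ (Fin n), x ≠ 0 → 0 < f4 ![x, x, x, x])
    (Q : EuclideanSpace ℝ (Fin n) → ℝ)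
    (hQ : ∀ x, Q x = (1 / 2) * Real.sqrt (f4 ![x, x, x, x])) :
    ∀ x : EuclideanSpace ℝ (Fin n), x ≠ 0 → ∀ h : EuclideanSpace ℝ (Fin n),
      iteratedFDeriv ℝ 2 Q x ![h, h] ≤ 3 * Real.sqrt (f4 ![h, h, h, h]) := by
  intro x hx h
  let F : ContinuousMultilinearMap ℝ (fun _ : Fin 4 => EuclideanSpace ℝ (Fin n)) ℝ :=
    ⟨f4, f4.continuous_of_finiteDimensional⟩
  have hF : F.toMultilinearMap.IsSymmetric := hsymm
  have ha : 0 < f4 ![x, x, x, x] := hpd x hx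
  rw [show Q = fun y => 1 / 2 * √(F ![y, y, y, y]) from funext hQ,
    F.iteratedFDeriv_two_half_sqrt_apply hF ha]
  calc _ ≤ 3 * f4 ![x, x, h, h] / √(f4 ![x, x, x, x]) := sub_le_self _ (by positivity)
    _ ≤ 3 * √(f4 ![h, h, h, h]) := by
      rw [div_le_iff₀ (Real.sqrt_pos.2 ha)]
      nlinarith [hF.apply_le_sqrt_mul_sqrt hpos x h]
end

section
/- Let f: ℝⁿ → ℝ be a convex quartic polynomial with f₄ = (1/24)D⁴f its (constant) leading symmetric 4-linear form. Then for every x, every direction h, and every τ > 0, the symmetric bilinear form D³f(x)[h] satisfies D³f(x)[h][u,u] ≤ (1/τ) ∇²f(x)[u,u] + 12 τ f₄[h,h,u,u] for all u. -/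
/-!
Along the line `s ↦ x + s • h` the fourth derivative of `f` is the constant `24 f₄`, so
`G s = D²f(x + s • h)[u, u]` is the quadratic `G 0 + D³f(x)[h, u, u] s + 12 f₄[h, h, u, u] s²`.
Convexity makes `G` nonnegative everywhere, and evaluating at `s = -τ` and dividing by `τ` gives
the bound.
-/

open Set

section LineDerivative

variable {𝕜 : Type*} [NontriviallyNormedField 𝕜]
  {E F : Type*} [NormedAddCommGroup E] [NormedSpace 𝕜 E] [NormedAddCommGroup F] [NormedSpace 𝕜 F]

theorem ContDiff.hasDerivAt_iteratedFDeriv_line {f : E → F} {N : WithTop ℕ∞} {k : ℕ}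
    (hf : ContDiff 𝕜 N f) (hk : k < N) (x h : E) (m : Fin k → E) (s : 𝕜) :
    HasDerivAt (fun t : 𝕜 => iteratedFDeriv 𝕜 k f (x + t • h) m)
      (iteratedFDeriv 𝕜 (k + 1) f (x + s • h) (Fin.cons h m)) s := by
  have hline : HasDerivAt (fun t : 𝕜 => x + t • h) h s := by
    simpa using ((hasDerivAt_id s).smul_const h).const_add x
  have hD : HasDerivAt (fun t : 𝕜 => iteratedFDeriv 𝕜 k f (x + t • h))
      (fderiv 𝕜 (iteratedFDeriv 𝕜 k f) (x + s • h) h) s :=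
    ((hf.differentiable_iteratedFDeriv hk) _).hasFDerivAt.comp_hasDerivAt s hline
  rw [iteratedFDeriv_succ_apply_left, Fin.cons_zero, Fin.tail_cons]
  exact (ContinuousMultilinearMap.apply 𝕜 (fun _ : Fin k => E) F m).hasFDerivAt.comp_hasDerivAt s hD

end LineDerivative

theorem ConvexOn.iteratedFDeriv_two_nonneg {E : Type*} [NormedAddCommGroup E] [NormedSpace ℝ E]
    {f : E → ℝ} (hconv : ConvexOn ℝ univ f) (hf : ContDiff ℝ 2 f) (x u : E) :
    0 ≤ iteratedFDeriv ℝ 2 f x ![u, u] := by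
  set g : ℝ → ℝ := fun t => f (x + t • u)
  have hg_convex : ConvexOn ℝ univ g := by
    have hline : f ∘ AffineMap.lineMap x (x + u) = g := by
      funext t
      simp [g, AffineMap.lineMap_apply, add_comm]
    simpa [hline] using hconv.comp_affineMap (AffineMap.lineMap x (x + u))
  have hg_deriv : ∀ t, HasDerivAt g (iteratedFDeriv ℝ 1 f (x + t • u) ![u]) t := fun t => by
    simpa using hf.hasDerivAt_iteratedFDeriv_line (by norm_num) x u ![] t
  have hderiv_eq : deriv g = fun t => iteratedFDeriv ℝ 1 f (x + t • u) ![u] :=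
    funext fun t => (hg_deriv t).deriv
  have hmono : Monotone (deriv g) := fun a b hab =>
    hg_convex.monotoneOn_deriv (fun t _ => (hg_deriv t).differentiableAt) trivial trivial hab
  have hderiv2 : HasDerivAt (deriv g) (iteratedFDeriv ℝ 2 f x ![u, u]) 0 := by
    simpa [hderiv_eq] using hf.hasDerivAt_iteratedFDeriv_line (by norm_num) x u ![u] 0
  exact hderiv2.nonneg_of_monotone hmono

theorem eq_quadratic_of_hasDerivAt {g g' : ℝ → ℝ} {c : ℝ}
    (hg : ∀ t, HasDerivAt g (g' t) t) (hg' : ∀ t, HasDerivAt g' c t) (t : ℝ) :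
    g t = g 0 + g' 0 * t + c / 2 * t ^ 2 := by
  have const_of_deriv_zero {φ : ℝ → ℝ} (hφ : ∀ t, HasDerivAt φ 0 t) (t : ℝ) : φ t = φ 0 :=
    is_const_of_deriv_eq_zero (fun t => (hφ t).differentiableAt) (fun t => (hφ t).deriv) t 0
  have hg'_affine (t : ℝ) : g' t = g' 0 + c * t := by
    have := const_of_deriv_zero (φ := fun t => g' t - c * t) (fun t => by
      simpa using (hg' t).fun_sub ((hasDerivAt_id t).const_mul c)) t
    linarith
  have hq (t : ℝ) : HasDerivAt (fun t => g' 0 * t + c / 2 * t ^ 2) (g' t) t := by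
    refine (((hasDerivAt_id t).const_mul (g' 0)).fun_add
      ((hasDerivAt_pow 2 t).const_mul (c / 2))).congr_deriv ?_
    rw [hg'_affine t]
    simp only [Nat.cast_ofNat]
    ring
  have := const_of_deriv_zero (φ := fun t => g t - (g' 0 * t + c / 2 * t ^ 2))
    (fun t => by simpa using (hg t).fun_sub (hq t)) t
  simp only [mul_zero, ne_eq, OfNat.ofNat_ne_zero, not_false_eq_true, zero_pow, add_zero,
    sub_zero] at this
  linarith

theorem third_deriv_bound_general {n : ℕ}
    (f : EuclideanSpace ℝ (Fin n) → ℝ)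
    (f4 : MultilinearMap ℝ (fun _ : Fin 4 => EuclideanSpace ℝ (Fin n)) ℝ)
    (hf : ContDiff ℝ 4 f)
    (hconv : ConvexOn ℝ Set.univ f)
    (hD4 : ∀ (x : EuclideanSpace ℝ (Fin n)) (v : Fin 4 → EuclideanSpace ℝ (Fin n)),
      iteratedFDeriv ℝ 4 f x v = 24 * f4 v)
    (x h u : EuclideanSpace ℝ (Fin n)) (τ : ℝ) (hτ : 0 < τ) :
    iteratedFDeriv ℝ 3 f x ![h, u, u]
      ≤ (1 / τ) * iteratedFDeriv ℝ 2 f x ![u, u] + 12 * τ * f4 ![h, h, u, u] := by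
  have hG : ∀ s : ℝ, HasDerivAt (fun t : ℝ => iteratedFDeriv ℝ 2 f (x + t • h) ![u, u])
      (iteratedFDeriv ℝ 3 f (x + s • h) ![h, u, u]) s :=
    hf.hasDerivAt_iteratedFDeriv_line (by norm_num) x h ![u, u]
  have hG' : ∀ s : ℝ, HasDerivAt (fun t : ℝ => iteratedFDeriv ℝ 3 f (x + t • h) ![h, u, u])
      (24 * f4 ![h, h, u, u]) s := fun s => by
    have h4 := hf.hasDerivAt_iteratedFDeriv_line (by norm_num) x h ![h, u, u] s
    rwa [hD4] at h4
  have hquad := eq_quadratic_of_hasDerivAt hG hG' (-τ)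
  have hnonneg := hconv.iteratedFDeriv_two_nonneg (hf.of_le (by norm_num)) (x + (-τ) • h) u
  simp only [zero_smul, add_zero] at hquad
  rw [div_mul_eq_mul_div, one_mul, div_add' _ _ _ hτ.ne', le_div_iff₀ hτ]
  nlinarith

/-- For a convex quartic polynomial `f` with leading form `f₄ = (1/24)D⁴f`,
and any `τ > 0`: `D³f(x)[h,u,u] ≤ (1/τ)∇²f(x)[u,u] + 12τ f₄[h,h,u,u]`. -/
theorem third_deriv_bound {n : ℕ}
    (f : EuclideanSpace ℝ (Fin n) → ℝ)
    (f4 : MultilinearMap ℝ (fun _ : Fin 4 => EuclideanSpace ℝ (Fin n)) ℝ)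
    (hsymm : ∀ (v : Fin 4 → EuclideanSpace ℝ (Fin n)) (σ : Equiv.Perm (Fin 4)),
      f4 (v ∘ σ) = f4 v)
    (hf : ContDiff ℝ 4 f)
    (hconv : ConvexOn ℝ Set.univ f)
    (hD4 : ∀ (x : EuclideanSpace ℝ (Fin n)) (v : Fin 4 → EuclideanSpace ℝ (Fin n)),
      iteratedFDeriv ℝ 4 f x v = 24 * f4 v)
    (x h u : EuclideanSpace ℝ (Fin n)) (τ : ℝ) (hτ : 0 < τ) :
    iteratedFDeriv ℝ 3 f x ![h, u, u]
      ≤ (1 / τ) * iteratedFDeriv ℝ 2 f x ![u, u] + 12 * τ * f4 ![h, h, u, u] :=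
  third_deriv_bound_general f f4 hf hconv hD4 x h u τ hτ
end

section
/- Let f be a convex quartic polynomial on ℝⁿ with positive definite leading form f₄ and ‖u‖_f = (f₄[u]⁴)^{1/4}. Then for all x, y and all τ > 0: f(y) − f(x) − ⟨∇f(x), y−x⟩ − (1/2)∇²f(x)[y−x,y−x] ≥ −(1/(6τ)) ∇²f(x)[y−x,y−x] + (1−2τ) ‖y−x‖_f⁴. -/
/-!
On the segment `t ↦ x + t • (y - x)` the function `f` restricts to a quartic polynomial `g` with
`g⁗ = 24 C`, `C = f₄[y - x]⁴`, so `g 1 - g 0 - g' 0 - g'' 0 / 2 = g''' 0 / 6 + C` and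
`g'' τ = g'' 0 + τ g''' 0 + 12 τ² C`. Convexity gives `g'' τ ≥ 0`; dividing by `6 τ` bounds
`g''' 0 / 6` from below by `-g'' 0 / (6 τ) - 2 τ C`.
-/

open Finset
open scoped Nat

theorem hasDerivAt_pow_succ_div_factorial (k : ℕ) (t : ℝ) :
    HasDerivAt (fun s : ℝ => s ^ (k + 1) / (k + 1)!) (t ^ k / k !) t := by
  refine ((hasDerivAt_pow (k + 1) t).div_const ((k + 1)! : ℝ)).congr_deriv ?_
  rw [Nat.factorial_succ]
  push_cast
  field_simp

theorem eq_taylor_of_hasDerivAt_of_eq_const {m : ℕ} {g : ℕ → ℝ → ℝ} {c : ℝ}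
    (hg : ∀ k < m, ∀ t, HasDerivAt (g k) (g (k + 1) t) t) (hm : ∀ t, g m t = c) (t : ℝ) :
    g 0 t = ∑ k ∈ range m, g k 0 * t ^ k / k ! + c * t ^ m / m ! := by
  induction m generalizing g t with
  | zero => simp [hm]
  | succ m ih =>
    set P : ℝ → ℝ := fun s =>
      ∑ k ∈ range m, g (k + 1) 0 * (s ^ (k + 1) / (k + 1)!) + c * (s ^ (m + 1) / (m + 1)!)
    have hP : ∀ s, HasDerivAt (fun s => g 0 s - P s) 0 s := by
      intro s
      have hPs : HasDerivAt P (g 1 s) s := by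
        rw [ih (g := fun k => g (k + 1)) (fun k hk => hg (k + 1) (by omega)) hm s]
        simp only [mul_div_assoc]
        exact (HasDerivAt.fun_sum fun k _ =>
          (hasDerivAt_pow_succ_div_factorial k s).const_mul _).add
          ((hasDerivAt_pow_succ_div_factorial m s).const_mul c)
      simpa using (hg 0 (by omega) s).fun_sub hPs
    have hconst : g 0 t - P t = g 0 0 - P 0 := is_const_of_deriv_eq_zero
      (fun s => (hP s).differentiableAt) (fun s => (hP s).deriv) t 0
    have hP0 : P 0 = 0 := by simp [P]
    calc g 0 t = g 0 0 + P t := by linarith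
      _ = _ := by
        rw [sum_range_succ', pow_zero, Nat.factorial_zero, Nat.cast_one, div_one, mul_one]
        simp only [P, mul_div_assoc]
        ring

section Line

variable {E F : Type*} [NormedAddCommGroup E] [NormedSpace ℝ E]
  [NormedAddCommGroup F] [NormedSpace ℝ F]

theorem hasDerivAt_iteratedFDeriv_add_smul {N : WithTop ℕ∞} {f : E → F}
    (hf : ContDiff ℝ N f) {k : ℕ} (hk : k < N) (x h : E) (t : ℝ) :
    HasDerivAt (fun s : ℝ => iteratedFDeriv ℝ k f (x + s • h) fun _ => h)
      (iteratedFDeriv ℝ (k + 1) f (x + t • h) fun _ => h) t := by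
  have hline : HasDerivAt (fun s : ℝ => x + s • h) h t := by
    simpa using ((hasDerivAt_id t).smul_const h).const_add x
  have hD := (hf.differentiable_iteratedFDeriv hk (x + t • h)).hasFDerivAt.comp_hasDerivAt t hline
  rw [iteratedFDeriv_succ_apply_left]
  exact (ContinuousMultilinearMap.apply ℝ (fun _ : Fin k => E) F fun _ => h).hasFDerivAt
    |>.comp_hasDerivAt t hD

theorem ConvexOn.iteratedFDeriv_two_nonneg_s11 {f : E → ℝ} (hconv : ConvexOn ℝ Set.univ f)
    (hf : ContDiff ℝ 2 f) (z h : E) : 0 ≤ iteratedFDeriv ℝ 2 f z fun _ => h := by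
  have hderiv (k : ℕ) (hk : k < 2) (t : ℝ) :=
    hasDerivAt_iteratedFDeriv_add_smul hf (by exact_mod_cast hk) z h t
  have hline : ConvexOn ℝ Set.univ fun s : ℝ => f (z + s • h) := by
    have heq : (fun s : ℝ => f (z + s • h)) = f ∘ AffineMap.lineMap z (z + h) := by
      ext s
      simp [AffineMap.lineMap_apply, add_comm]
    simpa [heq] using hconv.comp_affineMap (AffineMap.lineMap z (z + h))
  have hmono : Monotone fun s : ℝ => iteratedFDeriv ℝ 1 f (z + s • h) fun _ => h := by
    have hd (s : ℝ) : HasDerivAt (fun s : ℝ => f (z + s • h))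
        (iteratedFDeriv ℝ 1 f (z + s • h) fun _ => h) s := by
      simpa using hderiv 0 two_pos s
    have hmono' := hline.monotoneOn_deriv fun s _ => (hd s).differentiableAt
    rwa [funext fun s => (hd s).deriv, monotoneOn_univ] at hmono'
  simpa using (hderiv 1 one_lt_two 0).nonneg_of_monotone hmono

end Line

theorem quartic_lower_approx_general {n : ℕ}
    (f : EuclideanSpace ℝ (Fin n) → ℝ)
    (f4 : MultilinearMap ℝ (fun _ : Fin 4 => EuclideanSpace ℝ (Fin n)) ℝ)
    (hf : ContDiff ℝ 4 f)
    (hconv : ConvexOn ℝ Set.univ f)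
    (hD4 : ∀ (x : EuclideanSpace ℝ (Fin n)) (v : Fin 4 → EuclideanSpace ℝ (Fin n)),
      iteratedFDeriv ℝ 4 f x v = 24 * f4 v)
    (x y : EuclideanSpace ℝ (Fin n)) (τ : ℝ) (hτ : 0 < τ) :
    f y - f x - fderiv ℝ f x (y - x)
        - (1 / 2) * iteratedFDeriv ℝ 2 f x ![y - x, y - x]
      ≥ -(1 / (6 * τ)) * iteratedFDeriv ℝ 2 f x ![y - x, y - x]
        + (1 - 2 * τ) * f4 ![y - x, y - x, y - x, y - x] := by
  set h := y - x
  set D : ℕ → ℝ → ℝ := fun k t => iteratedFDeriv ℝ k f (x + t • h) fun _ => h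
  have hD (k : ℕ) (hk : k < 4) : ∀ t, HasDerivAt (D k) (D (k + 1) t) t :=
    hasDerivAt_iteratedFDeriv_add_smul hf (by exact_mod_cast hk) x h
  have hconst2 : (fun _ : Fin 2 => h) = ![h, h] := by ext i : 1; fin_cases i <;> rfl
  have hconst4 : (fun _ : Fin 4 => h) = ![h, h, h, h] := by ext i : 1; fin_cases i <;> rfl
  have hquartic (t : ℝ) : D 4 t = 24 * f4 ![h, h, h, h] := by simp only [D, hconst4, hD4]
  have htaylor := eq_taylor_of_hasDerivAt_of_eq_const hD hquartic 1
  have hhessian := eq_taylor_of_hasDerivAt_of_eq_const (g := fun k => D (k + 2))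
    (fun k hk => hD (k + 2) (by omega)) hquartic τ
  have hconvex : 0 ≤ D 2 τ := hconv.iteratedFDeriv_two_nonneg_s11 (hf.of_le (by norm_num)) _ h
  have hfy : D 0 1 = f y := by simp [D, h]
  have hfx : D 0 0 = f x := by simp [D]
  have hgrad : D 1 0 = fderiv ℝ f x h := by simp [D, iteratedFDeriv_one_apply]
  have hhess : D 2 0 = iteratedFDeriv ℝ 2 f x ![h, h] := by simp [D, hconst2]
  simp only [sum_range_succ, sum_range_zero] at htaylor hhessian
  norm_num [Nat.factorial] at htaylor hhessian
  rw [← hfy, ← hfx, ← hgrad, ← hhess, htaylor, ge_iff_le, ← sub_nonneg]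
  calc 0 ≤ D 2 τ / (6 * τ) := by positivity
    _ = _ := by
      rw [hhessian]
      field_simp
      ring

/-- Lower second-order bound for a convex quartic polynomial `f` with positive definite
leading form `f₄`: for all `x, y` and `τ > 0`,
`f(y) − f(x) − ⟨∇f(x),y−x⟩ − (1/2)∇²f(x)[y−x]² ≥ −(1/(6τ))∇²f(x)[y−x]² + (1−2τ)‖y−x‖_f⁴`. -/
theorem quartic_lower_approx {n : ℕ}
    (f : EuclideanSpace ℝ (Fin n) → ℝ)
    (f4 : MultilinearMap ℝ (fun _ : Fin 4 => EuclideanSpace ℝ (Fin n)) ℝ)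
    (hsymm : ∀ (v : Fin 4 → EuclideanSpace ℝ (Fin n)) (σ : Equiv.Perm (Fin 4)),
      f4 (v ∘ σ) = f4 v)
    (hf : ContDiff ℝ 4 f)
    (hconv : ConvexOn ℝ Set.univ f)
    (hD4 : ∀ (x : EuclideanSpace ℝ (Fin n)) (v : Fin 4 → EuclideanSpace ℝ (Fin n)),
      iteratedFDeriv ℝ 4 f x v = 24 * f4 v)
    (hpd : ∀ u : EuclideanSpace ℝ (Fin n), u ≠ 0 → 0 < f4 ![u, u, u, u])
    (x y : EuclideanSpace ℝ (Fin n)) (τ : ℝ) (hτ : 0 < τ) :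
    f y - f x - fderiv ℝ f x (y - x)
        - (1 / 2) * iteratedFDeriv ℝ 2 f x ![y - x, y - x]
      ≥ -(1 / (6 * τ)) * iteratedFDeriv ℝ 2 f x ![y - x, y - x]
        + (1 - 2 * τ) * f4 ![y - x, y - x, y - x, y - x] :=
  quartic_lower_approx_general f f4 hf hconv hD4 x y τ hτ
end

section
/- Let f: ℝⁿ → ℝ be four times continuously differentiable and convex, with μ‖h‖⁴ ≤ D⁴f(z)[h]⁴ ≤ L‖h‖⁴ for all relevant z and h (quartic regularity, 0 ≤ μ ≤ L, Euclidean norm). Then for all x, y in the domain and all γ > 0: f(y) ≤ f(x) + ⟨∇f(x), y−x⟩ + ((3γ+1)/(6γ)) ∇²f(x)[y−x,y−x] + ((2γ+1)/24) L ‖y−x‖⁴. -/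
/-!
Restrict `f` to the line `t ↦ x + t • h`, `h = y - x`. Third-order Taylor expansion with the
quartic bound gives `f y ≤ f x + Df[h] + D²f[h]²/2 + D³f[h]³/6 + L‖h‖⁴/24`. The cubic term is
paid for by convexity at the reflected point `x - γh`: expanding the second derivative there,
`0 ≤ D²f(x - γh)[h]² ≤ D²f(x)[h]² - γ D³f(x)[h]³ + γ²L‖h‖⁴/2`.
-/

open Set Nat

section

variable {𝕜 E F : Type*} [NontriviallyNormedField 𝕜] [NormedAddCommGroup E] [NormedSpace 𝕜 E]
  [NormedAddCommGroup F] [NormedSpace 𝕜 F]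

theorem iteratedDeriv_comp_add_smul {f : E → F} {n : WithTop ℕ∞} (hf : ContDiff 𝕜 n f)
    {k : ℕ} (hk : k ≤ n) (x h : E) (t : 𝕜) :
    iteratedDeriv k (fun s : 𝕜 => f (x + s • h)) t =
      iteratedFDeriv 𝕜 k f (x + t • h) (fun _ => h) := by
  induction k generalizing t with
  | zero => simp
  | succ k ih =>
    have hk' : (k : WithTop ℕ∞) ≤ n := le_trans (by exact_mod_cast k.le_succ) hk
    rw [iteratedDeriv_succ, funext fun s => ih hk' s]
    exact ((hf.of_le hk).contDiffAt).deriv_fderiv_add_smul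

theorem iteratedDeriv_iteratedDeriv (m n : ℕ) (f : 𝕜 → F) :
    iteratedDeriv m (iteratedDeriv n f) = iteratedDeriv (m + n) f := by
  simp only [iteratedDeriv_eq_iterate, Function.iterate_add]
  rfl

end

theorem ConvexOn.comp_add_smul {E : Type*} [AddCommGroup E] [Module ℝ E] {f : E → ℝ}
    (hf : ConvexOn ℝ univ f) (x h : E) : ConvexOn ℝ univ (fun t : ℝ => f (x + t • h)) := by
  simpa [Function.comp_def, AffineMap.lineMap_apply, add_comm] using
    hf.comp_affineMap (AffineMap.lineMap x (x + h))

theorem ConvexOn.iteratedDeriv_two_nonneg {g : ℝ → ℝ} (hg : ConvexOn ℝ univ g)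
    (hd : Differentiable ℝ g) (t : ℝ) : 0 ≤ iteratedDeriv 2 g t := by
  rw [iteratedDeriv_succ, iteratedDeriv_one]
  exact (monotoneOn_univ.mp (hg.monotoneOn_deriv fun s _ => hd s)).deriv_nonneg

theorem le_taylor_add_of_iteratedDeriv_le {g : ℝ → ℝ} {n : ℕ} (hg : ContDiff ℝ (n + 1) g)
    {a b K : ℝ} (hK : ∀ t ∈ uIoo a b, iteratedDeriv (n + 1) g t ≤ K)
    (hab : 0 ≤ (b - a) ^ (n + 1)) :
    g b ≤ ∑ k ∈ Finset.range (n + 1), iteratedDeriv k g a * (b - a) ^ k / k ! +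
      K * (b - a) ^ (n + 1) / (n + 1)! := by
  rcases eq_or_ne a b with rfl | hne
  · simp [Finset.sum_range_succ']
  obtain ⟨c, hc, hTaylor⟩ := taylor_mean_remainder_lagrange_iteratedDeriv hne hg.contDiffOn
  have hsum : taylorWithinEval g n (uIcc a b) a b =
      ∑ k ∈ Finset.range (n + 1), iteratedDeriv k g a * (b - a) ^ k / k ! := by
    rw [taylor_within_apply]
    refine Finset.sum_congr rfl fun k hk => ?_
    rw [iteratedDerivWithin_eq_iteratedDeriv (uniqueDiffOn_uIcc hne)
      (hg.of_le (by exact_mod_cast (Finset.mem_range.mp hk).le)).contDiffAt left_mem_uIcc,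
      smul_eq_mul]
    ring
  have hrem : iteratedDeriv (n + 1) g c * (b - a) ^ (n + 1) ≤ K * (b - a) ^ (n + 1) :=
    mul_le_mul_of_nonneg_right (hK c hc) hab
  rw [hsum] at hTaylor
  have := div_le_div_of_nonneg_right hrem (by positivity : (0 : ℝ) ≤ (n + 1)!)
  linarith

theorem ConvexOn.apply_one_le_of_iteratedDeriv_four_le {g : ℝ → ℝ} (hconv : ConvexOn ℝ univ g)
    (hg : ContDiff ℝ 4 g) {K γ : ℝ} (hγ : 0 < γ)
    (hK : ∀ t ∈ Icc (-γ) 1, iteratedDeriv 4 g t ≤ K) :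
    g 1 ≤ g 0 + deriv g 0 + (3 * γ + 1) / (6 * γ) * iteratedDeriv 2 g 0
      + (2 * γ + 1) / 24 * K := by
  have hexpand : g 1 ≤ g 0 + deriv g 0 + iteratedDeriv 2 g 0 / 2 + iteratedDeriv 3 g 0 / 6
      + K / 24 := by
    have hK' : ∀ t ∈ uIoo (0 : ℝ) 1, iteratedDeriv 4 g t ≤ K := fun t ht => by
      rw [uIoo_of_le zero_le_one] at ht
      exact hK t ⟨by linarith [ht.1], ht.2.le⟩
    have := le_taylor_add_of_iteratedDeriv_le (n := 3) hg hK' (by norm_num)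
    norm_num [Finset.sum_range_succ, Nat.factorial] at this
    linarith
  have hsecond : iteratedDeriv 2 g (-γ) ≤
      iteratedDeriv 2 g 0 - γ * iteratedDeriv 3 g 0 + γ ^ 2 * K / 2 := by
    have hg2 : ContDiff ℝ 2 (iteratedDeriv 2 g) := by
      rw [iteratedDeriv_eq_iterate]
      exact ContDiff.iterate_deriv' 2 2 hg
    have hK' : ∀ t ∈ uIoo 0 (-γ), iteratedDeriv 2 (iteratedDeriv 2 g) t ≤ K := fun t ht => by
      rw [uIoo_of_ge (by linarith)] at ht
      rw [iteratedDeriv_iteratedDeriv]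
      exact hK t ⟨ht.1.le, by linarith [ht.2]⟩
    have := le_taylor_add_of_iteratedDeriv_le (n := 1) hg2 hK' (sq_nonneg _)
    norm_num [Finset.sum_range_succ, iteratedDeriv_iteratedDeriv] at this
    linarith
  have hthird : iteratedDeriv 3 g 0 ≤ iteratedDeriv 2 g 0 / γ + γ * K / 2 := by
    rw [div_add' _ _ _ hγ.ne', le_div_iff₀ hγ]
    linarith [hconv.iteratedDeriv_two_nonneg (hg.differentiable (by norm_num)) (-γ)]
  have hcoeff : (3 * γ + 1) / (6 * γ) * iteratedDeriv 2 g 0 =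
      iteratedDeriv 2 g 0 / 2 + iteratedDeriv 2 g 0 / γ / 6 := by
    field_simp
    ring
  rw [hcoeff]
  linarith

theorem qregular_upper_bound_general {n : ℕ}
    (f : EuclideanSpace ℝ (Fin n) → ℝ) (L : ℝ)
    (hf : ContDiff ℝ 4 f)
    (hconv : ConvexOn ℝ Set.univ f)
    (hup : ∀ (z h : EuclideanSpace ℝ (Fin n)),
      iteratedFDeriv ℝ 4 f z ![h, h, h, h] ≤ L * ‖h‖ ^ 4)
    (x y : EuclideanSpace ℝ (Fin n)) (γ : ℝ) (hγ : 0 < γ) :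
    f y ≤ f x + fderiv ℝ f x (y - x)
      + ((3 * γ + 1) / (6 * γ)) * iteratedFDeriv ℝ 2 f x ![y - x, y - x]
      + ((2 * γ + 1) / 24) * L * ‖y - x‖ ^ 4 := by
  set h := y - x
  have hline : ∀ k : ℕ, k ≤ 4 → ∀ t : ℝ, iteratedDeriv k (fun s : ℝ => f (x + s • h)) t =
      iteratedFDeriv ℝ k f (x + t • h) (fun _ => h) := fun k hk =>
    iteratedDeriv_comp_add_smul hf (by exact_mod_cast hk) x h
  have hg : ContDiff ℝ 4 fun s : ℝ => f (x + s • h) := hf.comp (by fun_prop)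
  have hbound := (hconv.comp_add_smul x h).apply_one_le_of_iteratedDeriv_four_le hg hγ
    (K := L * ‖h‖ ^ 4) fun t _ => by
      simpa only [hline 4 le_rfl, Matrix.vec_single_eq_const, Matrix.vecCons_const] using
        hup (x + t • h) h
  have hderiv : deriv (fun s : ℝ => f (x + s • h)) 0 = fderiv ℝ f x h := by
    simpa using (hf.differentiable (by norm_num) _).deriv_comp_add_smul (t := (0 : ℝ)) (y := h)
  rw [hline 2 (by norm_num), hderiv] at hbound
  simp only [Matrix.vec_single_eq_const, Matrix.vecCons_const, mul_assoc _ L]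
  simpa [h] using hbound

/-- Upper growth bound for a convex, C⁴, quartic-regular function:
if `μ‖h‖⁴ ≤ D⁴f(z)[h]⁴ ≤ L‖h‖⁴` for all `z, h`, then for all `x, y` and `γ > 0`:
`f(y) ≤ f(x) + ⟨∇f(x),y−x⟩ + ((3γ+1)/(6γ))∇²f(x)[y−x]² + ((2γ+1)/24)L‖y−x‖⁴`. -/
theorem qregular_upper_bound {n : ℕ}
    (f : EuclideanSpace ℝ (Fin n) → ℝ) (μ L : ℝ)
    (hμL : 0 ≤ μ ∧ μ ≤ L)
    (hf : ContDiff ℝ 4 f)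
    (hconv : ConvexOn ℝ Set.univ f)
    (hlow : ∀ (z h : EuclideanSpace ℝ (Fin n)),
      μ * ‖h‖ ^ 4 ≤ iteratedFDeriv ℝ 4 f z ![h, h, h, h])
    (hup : ∀ (z h : EuclideanSpace ℝ (Fin n)),
      iteratedFDeriv ℝ 4 f z ![h, h, h, h] ≤ L * ‖h‖ ^ 4)
    (x y : EuclideanSpace ℝ (Fin n)) (γ : ℝ) (hγ : 0 < γ) :
    f y ≤ f x + fderiv ℝ f x (y - x)
      + ((3 * γ + 1) / (6 * γ)) * iteratedFDeriv ℝ 2 f x ![y - x, y - x]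
      + ((2 * γ + 1) / 24) * L * ‖y - x‖ ^ 4 :=
  qregular_upper_bound_general f L hf hconv hup x y γ hγ
end

section
/- The cubic polynomial θ(τ) = (1−τ)³ + τ/γ − 1, for γ ∈ [1/3, 1/2], has roots 0 and τ_{0,1}(γ) = 3/2 ∓ √(1/γ − 3/4); its smaller positive root τ₀(γ) satisfies 0 ≤ τ₀(γ) ≤ γ and τ₀(γ) ≤ (2/5)·(3γ−1)/γ; moreover the integral I₀ = ∫₀^{τ₀} θ(τ) dτ satisfies 4 I₀ = τ₀⁴ − 2τ₀³ ≥ −(16/125)((3γ−1)/γ)³. -/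
/-!
With `ξ = 3 - 1/γ = (3γ - 1)/γ ∈ [0, 1]` the cubic factors as `θ(τ) = -τ (τ² - 3τ + ξ)`, so its
nonzero roots are those of the quadratic, `3/2 ∓ √(9/4 - ξ)`. A point `x` with `ξ ≤ 3x - x²` lies
between these roots, hence above `τ₀`; this applies to `x = γ` because
`3γ - γ² - ξ = (1 - γ)³/γ ≥ 0`, and to `x = 2ξ/5` because `ξ ≤ 5/4`. Integrating `θ` and
substituting `ξ = 3τ₀ - τ₀²` gives `4 I₀ = τ₀⁴ - 2τ₀³ ≥ -2τ₀³ ≥ -2 (2ξ/5)³`.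
-/

theorem cubic_eq_zero_of_quadratic_eq_zero {ξ τ : ℝ} (h : τ ^ 2 - 3 * τ + ξ = 0) :
    (1 - τ) ^ 3 + τ * (3 - ξ) - 1 = 0 := by
  linear_combination (-τ) * h

theorem quadratic_eq_zero_of_sq_eq {ξ s : ℝ} (hs : s ^ 2 = 9 / 4 - ξ) :
    (3 / 2 + s) ^ 2 - 3 * (3 / 2 + s) + ξ = 0 := by
  linear_combination hs

theorem three_halves_sub_sqrt_le {ξ x : ℝ} (h : ξ ≤ 3 * x - x ^ 2) :
    3 / 2 - √(9 / 4 - ξ) ≤ x := by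
  have : 3 / 2 - x ≤ √(9 / 4 - ξ) := Real.le_sqrt_of_sq_le (by nlinarith)
  linarith

theorem four_mul_integral_cubic (ξ t : ℝ) :
    4 * ∫ τ in (0 : ℝ)..t, ((1 - τ) ^ 3 + τ * (3 - ξ) - 1) = -2 * ξ * t ^ 2 + 4 * t ^ 3 - t ^ 4 := by
  have hderiv (τ : ℝ) : HasDerivAt (fun τ : ℝ => -ξ * τ ^ 2 / 2 + τ ^ 3 - τ ^ 4 / 4)
      ((1 - τ) ^ 3 + τ * (3 - ξ) - 1) τ := by
    refine ((((hasDerivAt_pow 2 τ).const_mul (-ξ)).div_const 2).add (hasDerivAt_pow 3 τ) |>.sub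
      ((hasDerivAt_pow 4 τ).div_const 4)).congr_deriv ?_
    push_cast
    ring
  rw [intervalIntegral.integral_eq_sub_of_hasDerivAt (fun τ _ => hderiv τ)
    (Continuous.intervalIntegrable (by fun_prop) _ _)]
  ring

theorem neg_two_mul_pow_three_le_pow_four_sub {t x : ℝ} (ht : 0 ≤ t) (htx : t ≤ x) :
    -2 * x ^ 3 ≤ t ^ 4 - 2 * t ^ 3 := by
  nlinarith [pow_le_pow_left₀ ht htx 3, pow_nonneg ht 4]

/-- Properties of the cubic `θ(τ) = (1−τ)³ + τ/γ − 1` for `γ ∈ [1/3, 1/2]`: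
its roots are `0` and `τ_{0,1}(γ) = 3/2 ∓ √(1/γ − 3/4)`; the smaller positive root
`τ₀` satisfies `0 ≤ τ₀ ≤ γ` and `τ₀ ≤ (2/5)·(3γ−1)/γ`; moreover
`4∫₀^{τ₀} θ = τ₀⁴ − 2τ₀³ ≥ −(16/125)((3γ−1)/γ)³`. -/
theorem theta_cubic_properties (γ : ℝ) (hγ : γ ∈ Set.Icc (1/3 : ℝ) (1/2 : ℝ))
    (θ : ℝ → ℝ) (hθ : ∀ τ, θ τ = (1 - τ) ^ 3 + τ / γ - 1)
    (τ0 τ1 : ℝ)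
    (hτ0 : τ0 = 3/2 - Real.sqrt (1/γ - 3/4))
    (hτ1 : τ1 = 3/2 + Real.sqrt (1/γ - 3/4)) :
    θ 0 = 0 ∧ θ τ0 = 0 ∧ θ τ1 = 0 ∧
    0 ≤ τ0 ∧ τ0 ≤ γ ∧
    τ0 ≤ (2/5) * ((3 * γ - 1) / γ) ∧
    4 * ∫ τ in (0 : ℝ)..τ0, θ τ = τ0 ^ 4 - 2 * τ0 ^ 3 ∧
    τ0 ^ 4 - 2 * τ0 ^ 3 ≥ -(16/125) * ((3 * γ - 1) / γ) ^ 3 := by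
  obtain ⟨hγ_lo, hγ_hi⟩ := hγ
  have hγ_pos : 0 < γ := by linarith
  set ξ := (3 * γ - 1) / γ with hξ_def
  have hξ : 1 / γ = 3 - ξ := by rw [hξ_def]; field_simp; ring
  have hξ_nonneg : 0 ≤ ξ := div_nonneg (by linarith) hγ_pos.le
  have hξ_le_one : ξ ≤ 1 := (div_le_one hγ_pos).2 (by linarith)
  have hθξ : θ = fun τ => (1 - τ) ^ 3 + τ * (3 - ξ) - 1 := by
    funext τ; rw [hθ, ← hξ, mul_one_div]
  have hsqrt : √(1 / γ - 3 / 4) = √(9 / 4 - ξ) := by rw [hξ]; ring_nf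
  have hsq : √(9 / 4 - ξ) ^ 2 = 9 / 4 - ξ := Real.sq_sqrt (by linarith)
  have hτ0_root : τ0 ^ 2 - 3 * τ0 + ξ = 0 := by
    rw [hτ0, hsqrt, sub_eq_add_neg]
    exact quadratic_eq_zero_of_sq_eq (by rw [neg_sq, hsq])
  have hτ1_root : τ1 ^ 2 - 3 * τ1 + ξ = 0 := by
    rw [hτ1, hsqrt]
    exact quadratic_eq_zero_of_sq_eq hsq
  have hτ0_le {x : ℝ} (h : ξ ≤ 3 * x - x ^ 2) : τ0 ≤ x :=
    hτ0 ▸ hsqrt ▸ three_halves_sub_sqrt_le h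
  have hτ0_nonneg : 0 ≤ τ0 := by
    have : √(9 / 4 - ξ) ≤ 3 / 2 := Real.sqrt_le_iff.2 ⟨by norm_num, by linarith⟩
    linarith [hsqrt]
  have hτ0_le_γ : τ0 ≤ γ := by
    have hgap : 3 * γ - γ ^ 2 - ξ = (1 - γ) ^ 3 / γ := by rw [hξ_def]; field_simp; ring
    have : 0 ≤ (1 - γ) ^ 3 / γ := div_nonneg (pow_nonneg (by linarith) 3) hγ_pos.le
    exact hτ0_le (by linarith)
  have hτ0_le_ξ : τ0 ≤ 2 / 5 * ξ :=
    hτ0_le (by nlinarith [mul_nonneg hξ_nonneg (by linarith : (0 : ℝ) ≤ 5 - 4 * ξ)])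
  refine ⟨by rw [hθξ]; ring, by rw [hθξ]; exact cubic_eq_zero_of_quadratic_eq_zero hτ0_root,
    by rw [hθξ]; exact cubic_eq_zero_of_quadratic_eq_zero hτ1_root,
    hτ0_nonneg, hτ0_le_γ, hτ0_le_ξ, ?_, ?_⟩
  · rw [hθξ, four_mul_integral_cubic]
    linear_combination (-2) * τ0 ^ 2 * hτ0_root
  · calc -(16 / 125) * ξ ^ 3 = -2 * (2 / 5 * ξ) ^ 3 := by ring
      _ ≤ τ0 ^ 4 - 2 * τ0 ^ 3 := neg_two_mul_pow_three_le_pow_four_sub hτ0_nonneg hτ0_le_ξ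
end

section
/- For q ∈ (0, 1] and γ* = 1/(3(1 − (3/11) q^{1/3})), one has γ* ≤ 11/24 and (3γ*−1)/(3γ*+1) ≤ [ q·κ(γ*) / (1+2γ*) ]^{1/3}, where κ(γ) = (1−2γ) − (16/125)(1/q − 1)((3γ−1)/γ)³. -/
/-!
Write `t = q^{1/3} ∈ (0, 1]`. Then `γ* = 11 / (3(11 - 3t))`, so `(3γ* - 1)/γ* = 9t/11` and
`(3γ* - 1)/(3γ* + 1) = 3t/(22 - 3t) ≤ 3t/19`. Since `(1/q - 1) t³ = 1 - q ≤ 1`, the cubic term of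
`κ(γ*)` is at most `(16/125)(9/11)³ < 1/12 ≤ 1 - 2γ*`, and crude bounds then leave ample room.
-/

namespace GammaStar

lemma rpow_one_third_pow_three {q : ℝ} (hq : 0 ≤ q) : (q ^ ((1 : ℝ) / 3)) ^ 3 = q := by
  simpa using Real.rpow_inv_natCast_pow (n := 3) hq (by norm_num)

lemma le_rpow_one_third_of_pow_three_le {a b : ℝ} (ha : 0 ≤ a) (h : a ^ 3 ≤ b) :
    a ≤ b ^ ((1 : ℝ) / 3) := by
  rw [one_div, Real.le_rpow_inv_iff_of_pos ha ((pow_nonneg ha 3).trans h) three_pos]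
  exact_mod_cast h

/-- `γ*` as a function of `t = q^{1/3}`. -/
noncomputable def gammaStar (t : ℝ) : ℝ := 11 / (3 * (11 - 3 * t))

variable {t : ℝ}

lemma gammaStar_eq (ht : t < 11 / 3) : 1 / (3 * (1 - (3 / 11) * t)) = gammaStar t := by
  have : (11 - 3 * t) ≠ 0 := by linarith
  rw [gammaStar]
  field_simp

lemma gammaStar_pos (ht : t < 11 / 3) : 0 < gammaStar t := by
  unfold gammaStar
  have : 0 < 11 - 3 * t := by linarith
  positivity

lemma gammaStar_le (ht : t ≤ 1) : gammaStar t ≤ 11 / 24 := by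
  rw [gammaStar, div_le_div_iff₀ (by linarith) (by norm_num)]
  linarith

lemma three_mul_gammaStar_sub_one_div (ht : t < 11 / 3) :
    (3 * gammaStar t - 1) / gammaStar t = 9 * t / 11 := by
  have : (11 - 3 * t) ≠ 0 := by linarith
  rw [gammaStar]
  field_simp
  ring

lemma three_mul_gammaStar_sub_one_div_add_one (ht : t < 11 / 3) :
    (3 * gammaStar t - 1) / (3 * gammaStar t + 1) = 3 * t / (22 - 3 * t) := by
  have h11 : 11 - 3 * t ≠ 0 := by linarith
  have h22 : 22 - 3 * t ≠ 0 := by linarith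
  have hsum : 3 * gammaStar t + 1 = (22 - 3 * t) / (11 - 3 * t) := by
    rw [gammaStar]; field_simp; ring
  have hdiff : 3 * gammaStar t - 1 = 3 * t / (11 - 3 * t) := by
    rw [gammaStar]; field_simp; ring
  rw [hsum, hdiff]
  field_simp

lemma pow_three_div_le (ht0 : 0 ≤ t) (ht1 : t ≤ 1) :
    (3 * t / (22 - 3 * t)) ^ 3 ≤ 27 / 6859 * t ^ 3 := by
  have h : 3 * t / (22 - 3 * t) ≤ 3 * t / 19 :=
    div_le_div_of_nonneg_left (by linarith) (by norm_num) (by linarith)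
  calc (3 * t / (22 - 3 * t)) ^ 3 ≤ (3 * t / 19) ^ 3 := by
        gcongr
        exact div_nonneg (by linarith) (by linarith)
    _ = 27 / 6859 * t ^ 3 := by ring

lemma le_kappa_of_slope_eq {q γ : ℝ} (hq0 : 0 < q) (hγ : γ ≤ 11 / 24)
    (hslope : (3 * γ - 1) / γ = 9 * q ^ ((1 : ℝ) / 3) / 11) :
    1 / 12 - 11664 / 166375 ≤ (1 - 2 * γ) - (16/125) * (1/q - 1) * ((3 * γ - 1) / γ) ^ 3 := by
  have hcube : 16 / 125 * (1 / q - 1) * ((3 * γ - 1) / γ) ^ 3 = 11664 / 166375 * (1 - q) := by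
    rw [hslope, div_pow, mul_pow, rpow_one_third_pow_three hq0.le]
    field_simp
    ring
  rw [hcube]
  nlinarith

end GammaStar

open GammaStar in
/-- For `q ∈ (0,1]` and `γ* = 1/(3(1 − (3/11)q^{1/3}))` one has `γ* ≤ 11/24` and
`(3γ*−1)/(3γ*+1) ≤ [q·κ(γ*)/(1+2γ*)]^{1/3}`, where
`κ(γ) = (1−2γ) − (16/125)(1/q − 1)((3γ−1)/γ)³`. -/
theorem gamma_star_choice (q : ℝ) (hq : q ∈ Set.Ioc (0 : ℝ) 1)
    (γs : ℝ) (hγs : γs = 1 / (3 * (1 - (3/11) * q ^ ((1 : ℝ)/3))))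
    (κ : ℝ → ℝ)
    (hκ : ∀ γ, κ γ = (1 - 2 * γ) - (16/125) * (1/q - 1) * ((3 * γ - 1) / γ) ^ 3) :
    γs ≤ 11/24 ∧
    (3 * γs - 1) / (3 * γs + 1) ≤ (q * κ γs / (1 + 2 * γs)) ^ ((1 : ℝ)/3) := by
  obtain ⟨hq0, hq1⟩ := hq
  set t := q ^ ((1 : ℝ) / 3)
  have ht0 : 0 < t := by positivity
  have ht1 : t ≤ 1 := Real.rpow_le_one hq0.le hq1 (by norm_num)
  have ht3 : t < 11 / 3 := by linarith
  have htq : t ^ 3 = q := rpow_one_third_pow_three hq0.le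
  rw [gammaStar_eq ht3] at hγs
  subst hγs
  have hγ := gammaStar_le ht1
  refine ⟨hγ, ?_⟩
  have hκγ := hκ (gammaStar t) ▸
    le_kappa_of_slope_eq hq0 hγ (three_mul_gammaStar_sub_one_div ht3)
  have hden : 0 < 1 + 2 * gammaStar t := by linarith [gammaStar_pos ht3]
  have hκ_ratio : 27 / 6859 * (1 + 2 * gammaStar t) ≤ κ (gammaStar t) := by linarith
  rw [three_mul_gammaStar_sub_one_div_add_one ht3]
  refine le_rpow_one_third_of_pow_three_le (div_nonneg (by linarith) (by linarith))
    ((pow_three_div_le ht0.le ht1).trans ?_)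
  rw [← htq, le_div_iff₀ hden]
  linarith [mul_le_mul_of_nonneg_left hκ_ratio (pow_pos ht0 3).le]
end

section
/- Let φ: ℝⁿ → ℝ be convex and C² on an open convex set containing the segment [x,y], and suppose ‖∇²φ(z)‖ ≤ M for all z on this segment (operator norm w.r.t. a Euclidean norm induced by B ≻ 0). Then ‖∇φ(x) − ∇φ(y)‖* ² ≤ M ⟨∇φ(x) − ∇φ(y), x − y⟩. -/
/-!
By the fundamental theorem of calculus along the segment, `∇φ x - ∇φ y = A (x - y)` where
`A = ∫₀¹ ∇²φ (y + t (x - y)) dt` is the averaged Hessian. Convexity makes every Hessian, hence `A`,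
a positive operator, and the Hessian bound gives `‖A‖ ≤ M`. For a positive operator the
Cauchy–Schwarz inequality of the semi-inner product `⟪A ·, ·⟫` yields
`‖A u‖⁴ ≤ ⟪A u, u⟫ ⟪A (A u), A u⟫ ≤ ⟪A u, u⟫ ‖A‖ ‖A u‖²`, i.e. `‖A u‖² ≤ ‖A‖ ⟪A u, u⟫`.
-/

open RealInnerProductSpace MeasureTheory InnerProductSpace

namespace ContinuousLinearMap

variable {E : Type*} [NormedAddCommGroup E] [InnerProductSpace ℝ E]

namespace IsPositive

variable {T : E →L[ℝ] E}

theorem inner_apply_sq_le (hT : T.IsPositive) (u v : E) :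
    ⟪T u, v⟫ ^ 2 ≤ ⟪T u, u⟫ * ⟪T v, v⟫ := by
  have hsymm : ⟪T v, u⟫ = ⟪T u, v⟫ := by
    rw [hT.inner_left_eq_inner_right, real_inner_comm]
  have hquad : ∀ t : ℝ, 0 ≤ ⟪T v, v⟫ * (t * t) + 2 * ⟪T u, v⟫ * t + ⟪T u, u⟫ := fun t => by
    have := hT.inner_nonneg_left (u + t • v)
    simp only [map_add, map_smul, inner_add_left, inner_add_right, real_inner_smul_left,
      real_inner_smul_right, hsymm] at this
    linarith
  have := discrim_le_zero hquad
  rw [discrim] at this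
  linarith

theorem norm_apply_sq_le (hT : T.IsPositive) (u : E) : ‖T u‖ ^ 2 ≤ ‖T‖ * ⟪T u, u⟫ := by
  rcases eq_or_ne (T u) 0 with h | h
  · simp [h]
  have hTTu : ⟪T (T u), T u⟫ ≤ ‖T‖ * ‖T u‖ ^ 2 := calc
    ⟪T (T u), T u⟫ ≤ ‖T (T u)‖ * ‖T u‖ := real_inner_le_norm _ _
    _ ≤ ‖T‖ * ‖T u‖ * ‖T u‖ := by gcongr; exact T.le_opNorm _
    _ = ‖T‖ * ‖T u‖ ^ 2 := by ring
  have hquartic : ‖T u‖ ^ 2 * ‖T u‖ ^ 2 ≤ ‖T u‖ ^ 2 * (‖T‖ * ⟪T u, u⟫) := calc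
    ‖T u‖ ^ 2 * ‖T u‖ ^ 2 = ⟪T u, T u⟫ ^ 2 := by rw [real_inner_self_eq_norm_sq]; ring
    _ ≤ ⟪T u, u⟫ * ⟪T (T u), T u⟫ := hT.inner_apply_sq_le u (T u)
    _ ≤ ⟪T u, u⟫ * (‖T‖ * ‖T u‖ ^ 2) := by gcongr; exact hT.inner_nonneg_left u
    _ = ‖T u‖ ^ 2 * (‖T‖ * ⟪T u, u⟫) := by ring
  exact le_of_mul_le_mul_left hquartic (by positivity)

end IsPositive

theorem inner_intervalIntegral_apply [CompleteSpace E] {H : ℝ → E →L[ℝ] E} {a b : ℝ}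
    (hH : IntervalIntegrable H volume a b) (v w : E) :
    ⟪(∫ t in a..b, H t) v, w⟫ = ∫ t in a..b, ⟪H t v, w⟫ := by
  have := ((innerSL ℝ w).comp (apply ℝ E v)).intervalIntegral_comp_comm hH
  simpa [real_inner_comm] using this.symm

theorem isPositive_intervalIntegral [CompleteSpace E] {H : ℝ → E →L[ℝ] E} {a b : ℝ}
    (hab : a ≤ b) (hH : IntervalIntegrable H volume a b)
    (hpos : ∀ t ∈ Set.Icc a b, (H t).IsPositive) : (∫ t in a..b, H t).IsPositive := by
  refine (isPositive_iff _).2 ⟨fun v w => ?_, fun v => ?_⟩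
  · rw [coe_coe, inner_intervalIntegral_apply hH, real_inner_comm,
      inner_intervalIntegral_apply hH]
    refine intervalIntegral.integral_congr fun t ht => ?_
    rw [Set.uIcc_of_le hab] at ht
    rw [(hpos t ht).inner_left_eq_inner_right, real_inner_comm]
  · rw [inner_intervalIntegral_apply hH]
    exact intervalIntegral.integral_nonneg hab fun t ht => (hpos t ht).inner_nonneg_left v

end ContinuousLinearMap

section Gradient

variable {E : Type*} [NormedAddCommGroup E] [InnerProductSpace ℝ E] [CompleteSpace E]
  {φ : E → ℝ} {s : Set E} {z : E}

theorem gradient_eq_toDual_symm_comp_fderiv :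
    gradient φ = ((toDual ℝ E).symm.toContinuousLinearEquiv : StrongDual ℝ E ≃L[ℝ] E) ∘
      fderiv ℝ φ := rfl

theorem inner_fderiv_gradient_apply (v w : E) :
    ⟪fderiv ℝ (gradient φ) z v, w⟫ = fderiv ℝ (fderiv ℝ φ) z v w := by
  rw [gradient_eq_toDual_symm_comp_fderiv, ContinuousLinearEquiv.comp_fderiv]
  exact toDual_symm_apply

theorem ContDiffOn.gradient_of_isOpen {m n : WithTop ℕ∞} (hφ : ContDiffOn ℝ n φ s)
    (hs : IsOpen s) (hmn : m + 1 ≤ n) : ContDiffOn ℝ m (gradient φ) s := by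
  rw [gradient_eq_toDual_symm_comp_fderiv]
  exact (ContinuousLinearEquiv.contDiff _).comp_contDiffOn (hφ.fderiv_of_isOpen hs hmn)

theorem ConvexOn.inner_fderiv_gradient_self_nonneg (hconv : ConvexOn ℝ s φ) (hs : IsOpen s)
    (hφ : DifferentiableOn ℝ φ s) (hz : z ∈ s) (hgrad : DifferentiableAt ℝ (gradient φ) z)
    (v : E) : 0 ≤ ⟪fderiv ℝ (gradient φ) z v, v⟫ := by
  set γ : ℝ →ᵃ[ℝ] E := AffineMap.lineMap z (z + v)
  have hγ : ∀ t, HasDerivAt γ v t := fun t => by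
    simpa using AffineMap.hasDerivAt_lineMap (a := z) (b := z + v) (x := t)
  have hU : γ ⁻¹' s ∈ nhds 0 :=
    (hs.preimage AffineMap.lineMap_continuous).mem_nhds (by simpa [γ] using hz)
  have hmono : MonotoneOn (fun t => ⟪gradient φ (γ t), v⟫) (γ ⁻¹' s) := by
    have hderiv : ∀ t ∈ γ ⁻¹' s, HasDerivAt (φ ∘ γ) ⟪gradient φ (γ t), v⟫ t := fun t ht => by
      rw [inner_gradient_left]
      exact ((hφ _ ht).differentiableAt (hs.mem_nhds ht)).hasFDerivAt.comp_hasDerivAt t (hγ t)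
    exact ((hconv.comp_affineMap γ).monotoneOn_deriv fun t ht =>
      (hderiv t ht).differentiableAt).congr fun t ht => (hderiv t ht).deriv
  have hderiv_zero :
      HasDerivAt (fun t => ⟪gradient φ (γ t), v⟫) ⟪fderiv ℝ (gradient φ) z v, v⟫ 0 := by
    have hgradγ : HasFDerivAt (gradient φ) (fderiv ℝ (gradient φ) z) (γ 0) := by
      simpa [γ] using hgrad.hasFDerivAt
    simpa using (hgradγ.comp_hasDerivAt 0 (hγ 0)).inner ℝ (hasDerivAt_const 0 v)
  have hacc : AccPt (0 : ℝ) (Filter.principal (γ ⁻¹' s)) := by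
    simpa using (PerfectSpace.univ_preperfect (0 : ℝ) (Set.mem_univ _)).nhds_inter hU
  exact hderiv_zero.hasDerivWithinAt.nonneg_of_monotoneOn hacc hmono

theorem ConvexOn.isPositive_fderiv_gradient (hconv : ConvexOn ℝ s φ) (hs : IsOpen s)
    (hφ : ContDiffOn ℝ 2 φ s) (hz : z ∈ s) : (fderiv ℝ (gradient φ) z).IsPositive := by
  have hgrad : ContDiffOn ℝ 1 (gradient φ) s := hφ.gradient_of_isOpen hs (by norm_num)
  refine (ContinuousLinearMap.isPositive_iff _).2 ⟨fun v w => ?_,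
    hconv.inner_fderiv_gradient_self_nonneg hs (hφ.differentiableOn (by norm_num)) hz
      ((hgrad.differentiableOn one_ne_zero).differentiableAt (hs.mem_nhds hz))⟩
  rw [ContinuousLinearMap.coe_coe, inner_fderiv_gradient_apply, real_inner_comm,
    inner_fderiv_gradient_apply]
  exact ((hφ.contDiffAt (hs.mem_nhds hz)).isSymmSndFDerivAt (by simp)).eq v w

end Gradient

section LineIntegral

variable {E F : Type*} [NormedAddCommGroup E] [NormedSpace ℝ E] [NormedAddCommGroup F]
  {a b : E}

theorem ContinuousOn.intervalIntegrable_comp_lineMap {g : E → F}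
    (hg : ContinuousOn g (segment ℝ a b)) :
    IntervalIntegrable (fun t => g (AffineMap.lineMap a b t)) volume 0 1 := by
  refine (hg.comp AffineMap.lineMap_continuous.continuousOn fun t ht => ?_).intervalIntegrable
  exact lineMap_mem_segment ℝ a b (by simpa using ht)

theorem sub_eq_intervalIntegral_fderiv_lineMap_apply [NormedSpace ℝ F] [CompleteSpace F]
    {f : E → F} (hf : ∀ z ∈ segment ℝ a b, DifferentiableAt ℝ f z)
    (hf' : ContinuousOn (fderiv ℝ f) (segment ℝ a b)) :
    f b - f a = (∫ t in (0 : ℝ)..1, fderiv ℝ f (AffineMap.lineMap a b t)) (b - a) := by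
  have hderiv : ∀ t ∈ Set.uIcc (0 : ℝ) 1, HasDerivAt (f ∘ AffineMap.lineMap a b)
      (fderiv ℝ f (AffineMap.lineMap a b t) (b - a)) t := fun t ht =>
    have hz := lineMap_mem_segment ℝ a b (by simpa [Set.uIcc_of_le zero_le_one] using ht)
    (hf _ hz).hasFDerivAt.comp_hasDerivAt t AffineMap.hasDerivAt_lineMap
  rw [ContinuousLinearMap.intervalIntegral_apply hf'.intervalIntegrable_comp_lineMap,
    intervalIntegral.integral_eq_sub_of_hasDerivAt hderiv
      (hf'.clm_apply continuousOn_const).intervalIntegrable_comp_lineMap]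
  simp

end LineIntegral

theorem gradient_cocoercivity_general {n : ℕ}
    (φ : EuclideanSpace ℝ (Fin n) → ℝ)
    (s : Set (EuclideanSpace ℝ (Fin n))) (hs : IsOpen s)
    (x y : EuclideanSpace ℝ (Fin n)) (hseg : segment ℝ x y ⊆ s)
    (hC2 : ContDiffOn ℝ 2 φ s)
    (hconv : ConvexOn ℝ s φ)
    (M : ℝ)
    (hM : ∀ z ∈ segment ℝ x y, ‖fderiv ℝ (fun w => gradient φ w) z‖ ≤ M) :
    ‖gradient φ x - gradient φ y‖ ^ 2
      ≤ M * ⟪gradient φ x - gradient φ y, x - y⟫ := by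
  rw [segment_symm] at hseg hM
  have hgrad : ContDiffOn ℝ 1 (gradient φ) s := hC2.gradient_of_isOpen hs (by norm_num)
  have hH : ContinuousOn (fderiv ℝ (gradient φ)) (segment ℝ y x) :=
    (hgrad.continuousOn_fderiv_of_isOpen hs le_rfl).mono hseg
  set A := ∫ t in (0 : ℝ)..1, fderiv ℝ (gradient φ) (AffineMap.lineMap y x t)
  have hA : gradient φ x - gradient φ y = A (x - y) :=
    sub_eq_intervalIntegral_fderiv_lineMap_apply
      (fun z hz => (hgrad.differentiableOn one_ne_zero).differentiableAt (hs.mem_nhds (hseg hz)))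
      hH
  have hApos : A.IsPositive :=
    ContinuousLinearMap.isPositive_intervalIntegral zero_le_one hH.intervalIntegrable_comp_lineMap
      fun t ht => hconv.isPositive_fderiv_gradient hs hC2 (hseg (lineMap_mem_segment ℝ y x ht))
  have hAnorm : ‖A‖ ≤ M := by
    simpa using intervalIntegral.norm_integral_le_of_norm_le_const
      fun t (ht : t ∈ Set.uIoc 0 1) =>
        hM _ (lineMap_mem_segment ℝ y x (Set.Ioc_subset_Icc_self (by simpa using ht)))
  rw [hA]
  exact (hApos.norm_apply_sq_le _).trans
    (mul_le_mul_of_nonneg_right hAnorm (hApos.inner_nonneg_left _))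

/-- Cocoercivity-type inequality (Lemma 1): if `φ` is convex and C² on an open convex set
containing the segment `[x,y]`, with `‖∇²φ(z)‖ ≤ M` along the segment, then
`‖∇φ(x) − ∇φ(y)‖² ≤ M ⟨∇φ(x) − ∇φ(y), x − y⟩`. -/
theorem gradient_cocoercivity {n : ℕ}
    (φ : EuclideanSpace ℝ (Fin n) → ℝ)
    (s : Set (EuclideanSpace ℝ (Fin n))) (hs : IsOpen s) (hsc : Convex ℝ s)
    (x y : EuclideanSpace ℝ (Fin n)) (hseg : segment ℝ x y ⊆ s)
    (hC2 : ContDiffOn ℝ 2 φ s)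
    (hconv : ConvexOn ℝ s φ)
    (M : ℝ)
    (hM : ∀ z ∈ segment ℝ x y, ‖fderiv ℝ (fun w => gradient φ w) z‖ ≤ M) :
    ‖gradient φ x - gradient φ y‖ ^ 2
      ≤ M * ⟪gradient φ x - gradient φ y, x - y⟫ :=
  gradient_cocoercivity_general φ s hs x y hseg hC2 hconv M hM
end
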